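/- arXiv:2205.15984 — 5 statements merged into one kernel-verified Lean document; each statement's English description precedes it below -/
import Mathlib

section
/- Let (M₁,d₁) and (M₂,d₂) be complete metric spaces, let q : M₁ → M₂ be a quasi-isometry, let (K,d) be a complete metric space, and for each ε > 0 let F_ε : M₂ → K be a continuous map such that lim_{ε→0}(M₂, ε·d₂, F_ε) = (K,d). Then the maps F_ε ∘ q : M₁ → K satisfy conditions (1) and (2) of the limit definition for the rescaled spaces (M₁, ε·d₁); that is, lim_{ε→0}(M₁, ε·d₁, F_ε ∘ q) = (K,d). -/
/-!
A quasi-isometry distorts distances by a bounded factor plus an additive constant `B`, and after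
rescaling by `ε` that additive error becomes `O(ε)`, which can be absorbed into the vanishing
constants `A_ε`. Coarse surjectivity puts every point of `M₂` within `C` of the image of `q`;
rescaled by `ε` this distance tends to `0`, so approximating sequences in `M₂` can be moved
into the image of `q` without changing their limits in `K`.
-/

open Filter Set

/-- A map `q : M₁ → M₂` between metric spaces is a *quasi-isometry* if there exist
constants `A > 1`, `B > 0`, `C > 0` such that
`A⁻¹ · d₁(x,y) − B ≤ d₂(q x, q y) ≤ A · d₁(x,y) + B` for all `x, y`,
and every `z ∈ M₂` is at distance at most `C` from a point in the image of `q`. -/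
def IsQuasiIsometry {M₁ M₂ : Type*} [MetricSpace M₁] [MetricSpace M₂] (q : M₁ → M₂) : Prop :=
  ∃ A B C : ℝ, 1 < A ∧ 0 < B ∧ 0 < C ∧
    (∀ x y : M₁,
      A⁻¹ * dist x y - B ≤ dist (q x) (q y) ∧ dist (q x) (q y) ≤ A * dist x y + B) ∧
    (∀ z : M₂, ∃ x : M₁, dist z (q x) ≤ C)

/-- `lim_{ε→0} (N, ε·d_N, F_ε) = (K, d)`:
(1) there exist `B' > 0` and constants `A_ε > 0` with `A_ε → 0` as `ε → 0⁺` such that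
`B'⁻¹·(ε·d_N(x,y)) − A_ε ≤ d(F_ε x, F_ε y) ≤ B'·(ε·d_N(x,y)) + A_ε` for all `x, y`;
(2) every `w ∈ K` is the limit as `ε → 0⁺` of points `F_ε (x_ε)`. -/
def ScaledLimit {N K : Type*} [MetricSpace N] [MetricSpace K] (F : ℝ → N → K) : Prop :=
  (∃ B' : ℝ, 0 < B' ∧ ∃ A : ℝ → ℝ, (∀ ε > (0 : ℝ), 0 < A ε) ∧
    Tendsto A (nhdsWithin 0 (Ioi 0)) (nhds 0) ∧
    ∀ ε > (0 : ℝ), ∀ x y : N,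
      B'⁻¹ * (ε * dist x y) - A ε ≤ dist (F ε x) (F ε y) ∧
        dist (F ε x) (F ε y) ≤ B' * (ε * dist x y) + A ε) ∧
  (∀ w : K, ∃ x : ℝ → N,
    Tendsto (fun ε => F ε (x ε)) (nhdsWithin 0 (Ioi 0)) (nhds w))

open Topology

section

variable {N K : Type*} [MetricSpace N] [MetricSpace K]

/-- Condition (1) of `ScaledLimit`. -/
def ScaledCoarseBiLipschitz (F : ℝ → N → K) : Prop :=
  ∃ B' : ℝ, 0 < B' ∧ ∃ A : ℝ → ℝ, (∀ ε > (0 : ℝ), 0 < A ε) ∧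
    Tendsto A (𝓝[>] 0) (𝓝 0) ∧
    ∀ ε > (0 : ℝ), ∀ x y : N,
      B'⁻¹ * (ε * dist x y) - A ε ≤ dist (F ε x) (F ε y) ∧
        dist (F ε x) (F ε y) ≤ B' * (ε * dist x y) + A ε

lemma tendsto_const_mul_nhdsGT_zero (c : ℝ) : Tendsto (fun ε : ℝ => c * ε) (𝓝[>] 0) (𝓝 0) := by
  simpa using ((continuous_const_mul c).tendsto 0).mono_left nhdsWithin_le_nhds

lemma ScaledCoarseBiLipschitz.tendsto_dist_of_dist_le {F : ℝ → N → K}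
    (hF : ScaledCoarseBiLipschitz F) {x y : ℝ → N} {C : ℝ} (hxy : ∀ ε, dist (x ε) (y ε) ≤ C) :
    Tendsto (fun ε => dist (F ε (x ε)) (F ε (y ε))) (𝓝[>] 0) (𝓝 0) := by
  obtain ⟨B', hB', A, -, hA, hF⟩ := hF
  have hbound : Tendsto (fun ε => B' * C * ε + A ε) (𝓝[>] 0) (𝓝 0) := by
    simpa using (tendsto_const_mul_nhdsGT_zero (B' * C)).add hA
  refine squeeze_zero' (Eventually.of_forall fun _ => dist_nonneg) ?_ hbound
  filter_upwards [self_mem_nhdsWithin] with ε (hε : 0 < ε)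
  calc dist (F ε (x ε)) (F ε (y ε)) ≤ B' * (ε * dist (x ε) (y ε)) + A ε := (hF ε hε _ _).2
    _ ≤ B' * (ε * C) + A ε := by gcongr; exact hxy ε
    _ = B' * C * ε + A ε := by ring

end

section

variable {M₁ M₂ K : Type*} [MetricSpace M₂] [MetricSpace K]

/-- The additive error `B` of `q` costs `(B' + B'⁻¹) * B * ε`, which still tends to `0`. -/
lemma ScaledCoarseBiLipschitz.comp [MetricSpace M₁] {F : ℝ → M₂ → K}
    (hF : ScaledCoarseBiLipschitz F) {q : M₁ → M₂} {A B : ℝ} (hA : 0 < A) (hB : 0 ≤ B)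
    (hq : ∀ x y, A⁻¹ * dist x y - B ≤ dist (q x) (q y) ∧ dist (q x) (q y) ≤ A * dist x y + B) :
    ScaledCoarseBiLipschitz (fun ε => F ε ∘ q) := by
  obtain ⟨B', hB', Aε, hAε, hAε_tendsto, hF⟩ := hF
  refine ⟨B' * A, by positivity, fun ε => Aε ε + (B' + B'⁻¹) * B * ε,
    fun ε hε => by have := hAε ε hε; positivity,
    by simpa using hAε_tendsto.add (tendsto_const_mul_nhdsGT_zero ((B' + B'⁻¹) * B)),
    fun ε hε x y => ⟨?_, ?_⟩⟩
  · calc (B' * A)⁻¹ * (ε * dist x y) - (Aε ε + (B' + B'⁻¹) * B * ε)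
        ≤ B'⁻¹ * (ε * (A⁻¹ * dist x y - B)) - Aε ε := by
          have : 0 ≤ B' * B * ε := by positivity
          rw [mul_inv]; linarith
      _ ≤ B'⁻¹ * (ε * dist (q x) (q y)) - Aε ε := by gcongr; exact (hq x y).1
      _ ≤ dist (F ε (q x)) (F ε (q y)) := (hF ε hε _ _).1
  · calc dist (F ε (q x)) (F ε (q y)) ≤ B' * (ε * dist (q x) (q y)) + Aε ε := (hF ε hε _ _).2
      _ ≤ B' * (ε * (A * dist x y + B)) + Aε ε := by gcongr; exact (hq x y).2
      _ ≤ B' * A * (ε * dist x y) + (Aε ε + (B' + B'⁻¹) * B * ε) := by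
          have : 0 ≤ B'⁻¹ * B * ε := by positivity
          linarith

lemma ScaledCoarseBiLipschitz.exists_tendsto_comp {F : ℝ → M₂ → K}
    (hF : ScaledCoarseBiLipschitz F) {q : M₁ → M₂} {C : ℝ} (hq : ∀ z, ∃ x, dist z (q x) ≤ C)
    {w : K} {x : ℝ → M₂} (hx : Tendsto (fun ε => F ε (x ε)) (𝓝[>] 0) (𝓝 w)) :
    ∃ x₁ : ℝ → M₁, Tendsto (fun ε => (F ε ∘ q) (x₁ ε)) (𝓝[>] 0) (𝓝 w) := by
  choose x₁ hx₁ using fun ε => hq (x ε)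
  exact ⟨x₁, hx.congr_dist (hF.tendsto_dist_of_dist_le hx₁)⟩

end

theorem scaledLimit_of_quasiIsometry_general {M₁ M₂ K : Type*}
    [MetricSpace M₁] [MetricSpace M₂]
    [MetricSpace K]
    (q : M₁ → M₂) (hq : IsQuasiIsometry q)
    (F : ℝ → M₂ → K)
    (hlim : ScaledLimit F) :
    ScaledLimit (fun ε => F ε ∘ q) := by
  obtain ⟨A, B, C, hA, hB, -, hq_dist, hq_dense⟩ := hq
  obtain ⟨hF, hF_dense⟩ := hlim
  have hF : ScaledCoarseBiLipschitz F := hF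
  refine ⟨hF.comp (by linarith) hB.le hq_dist, fun w => ?_⟩
  obtain ⟨x, hx⟩ := hF_dense w
  exact hF.exists_tendsto_comp hq_dense hx

/-- If `q : M₁ → M₂` is a quasi-isometry and `lim_{ε→0}(M₂, ε·d₂, F_ε) = (K,d)`, then
`lim_{ε→0}(M₁, ε·d₁, F_ε ∘ q) = (K,d)`. -/
theorem scaledLimit_of_quasiIsometry {M₁ M₂ K : Type*}
    [MetricSpace M₁] [CompleteSpace M₁] [MetricSpace M₂] [CompleteSpace M₂]
    [MetricSpace K] [CompleteSpace K]
    (q : M₁ → M₂) (hq : IsQuasiIsometry q)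
    (F : ℝ → M₂ → K) (hFcont : ∀ ε > (0 : ℝ), Continuous (F ε))
    (hlim : ScaledLimit F) :
    ScaledLimit (fun ε => F ε ∘ q) :=
  scaledLimit_of_quasiIsometry_general q hq F hlim
end

section
/- Let (M_n,d_n), n ∈ ℕ, and (M,d) be complete metric spaces with (M,d) separable, let F_n : M_n → M be continuous maps with lim_n(M_n,d_n,F_n) = (M,d), and let f_n : M_n → ℝ be an equicontinuous family of functions which is bounded on compact sets. Then there exist a subsequence n(k) and a continuous function f : M → ℝ such that f_{n(k)} converges to f uniformly on compact sets. -/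
open Filter Set Topology

/-! The lower bound in condition (1) makes the `f n` eventually equicontinuous for the distance
pulled back from `M` by `F n`. Approximate the points `u i` of a countable dense subset of `M`
by points `x i n` (condition (2)); the values `f n (x i n)` are bounded in `n`, so by Tychonoff
one subsequence makes them converge for every `i`, say to `L i`. Equicontinuity makes
`u i ↦ L i` uniformly continuous, so it extends to a uniformly continuous `g : M → ℝ`, and
covering a compact set by finitely many small balls around the `u i` upgrades convergence at
the `u i` to uniform convergence on it. -/

theorem exists_strictMono_tendsto_of_forall_bounded {ι : Type*} [Countable ι] (S : ℕ → ι → ℝ)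
    (hS : ∀ i, ∃ C, ∀ n, |S n i| ≤ C) :
    ∃ φ : ℕ → ℕ, StrictMono φ ∧ ∃ L : ι → ℝ, ∀ i, Tendsto (fun k => S (φ k) i) atTop (𝓝 (L i)) := by
  choose C hC using hS
  obtain ⟨L, -, φ, hφ, hL⟩ := (isCompact_univ_pi fun i => isCompact_Icc).tendsto_subseq
    fun n i (_ : i ∈ univ) => abs_le.1 (hC i n)
  exact ⟨φ, hφ, L, tendsto_pi_nhds.1 hL⟩

theorem DenseRange.exists_uniformContinuous_comp_eq {α β ι : Type*} [PseudoMetricSpace α]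
    [MetricSpace β] [CompleteSpace β] {u : ι → α} (hu : DenseRange u) {L : ι → β}
    (hL : ∀ ε > 0, ∃ η > 0, ∀ i j, dist (u i) (u j) < η → dist (L i) (L j) ≤ ε) :
    ∃ g : α → β, UniformContinuous g ∧ ∀ i, g (u i) = L i := by
  have hL_eq : ∀ i j, u i = u j → L i = L j := fun i j hij =>
    dist_le_zero.1 <| le_of_forall_gt fun ε hε => by
      obtain ⟨η, hη, hLη⟩ := hL (ε / 2) (half_pos hε)
      linarith [hLη i j (by simpa [hij] using hη)]
  let h : range u → β := fun y => L y.2.choose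
  have hh : ∀ i, h ⟨u i, mem_range_self i⟩ = L i := fun i =>
    hL_eq _ _ (mem_range_self (f := u) i).choose_spec
  have hh_unif : UniformContinuous h := by
    refine Metric.uniformContinuous_iff.2 fun ε hε => ?_
    obtain ⟨η, hη, hLη⟩ := hL (ε / 2) (half_pos hε)
    refine ⟨η, hη, fun {y z} hyz => (hLη _ _ ?_).trans_lt (half_lt_self hε)⟩
    rwa [y.2.choose_spec, z.2.choose_spec]
  have hval := (isUniformEmbedding_subtype_val : IsUniformEmbedding ((↑) : range u → α))
  refine ⟨_, uniformContinuous_uniformly_extend hval.isUniformInducing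
    hu.denseRange_val hh_unif, fun i => ?_⟩
  rw [← hh i]
  exact uniformly_extend_of_ind hval.isUniformInducing hu.denseRange_val hh_unif
    ⟨u i, mem_range_self i⟩

section AsymptoticallyEquicontinuous

variable {X : ℕ → Type*} {M : Type*} [PseudoMetricSpace M] {F : ∀ n, X n → M} {f : ∀ n, X n → ℝ}

variable (F f) in
def AsymptoticallyEquicontinuousVia : Prop :=
  ∀ ε > 0, ∃ η > 0, ∀ᶠ n in atTop, ∀ a b : X n, dist (F n a) (F n b) < η → |f n a - f n b| < ε

theorem asymptoticallyEquicontinuousVia_of_le_dist [∀ n, PseudoMetricSpace (X n)] {c : ℝ}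
    {A : ℕ → ℝ} (hc : 0 < c) (hA : Tendsto A atTop (𝓝 0))
    (hF : ∀ n, ∀ a b : X n, c * dist a b - A n ≤ dist (F n a) (F n b))
    (hf : ∀ ε > 0, ∃ δ > 0, ∀ n, ∀ a b : X n, dist a b < δ → |f n a - f n b| < ε) :
    AsymptoticallyEquicontinuousVia F f := by
  intro ε hε
  obtain ⟨δ, hδ, hfδ⟩ := hf ε hε
  refine ⟨c * δ / 2, by positivity, ?_⟩
  filter_upwards [hA.eventually (gt_mem_nhds (by positivity : 0 < c * δ / 2))] with n hAn a b hab
  refine hfδ n a b (lt_of_mul_lt_mul_left ?_ hc.le)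
  linarith [hF n a b]

namespace AsymptoticallyEquicontinuousVia

theorem comp_strictMono (h : AsymptoticallyEquicontinuousVia F f) {φ : ℕ → ℕ}
    (hφ : StrictMono φ) :
    AsymptoticallyEquicontinuousVia (fun k => F (φ k)) (fun k => f (φ k)) := by
  intro ε hε
  obtain ⟨η, hη, hev⟩ := h ε hε
  exact ⟨η, hη, hφ.tendsto_atTop.eventually hev⟩

theorem abs_sub_le_of_tendsto (h : AsymptoticallyEquicontinuousVia F f) {ε : ℝ} (hε : 0 < ε) :
    ∃ η > 0, ∀ {a b : ∀ n, X n} {y z : M} {s t : ℝ},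
      Tendsto (fun n => F n (a n)) atTop (𝓝 y) → Tendsto (fun n => F n (b n)) atTop (𝓝 z) →
      Tendsto (fun n => f n (a n)) atTop (𝓝 s) → Tendsto (fun n => f n (b n)) atTop (𝓝 t) →
      dist y z < η → |s - t| ≤ ε := by
  obtain ⟨η, hη, hFf⟩ := h ε hε
  refine ⟨η, hη, fun hy hz hs ht hyz => le_of_tendsto (hs.sub ht).abs ?_⟩
  filter_upwards [hFf, (hy.dist hz).eventually (gt_mem_nhds hyz)] with n hn hn' using
    (hn _ _ hn').le

theorem eventually_forall_abs_sub_lt (h : AsymptoticallyEquicontinuousVia F f) {ι : Type*}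
    {u : ι → M} (hu : DenseRange u) {x : ι → ∀ n, X n}
    (hxu : ∀ i, Tendsto (fun n => F n (x i n)) atTop (𝓝 (u i)))
    {g : M → ℝ} (hg : UniformContinuous g)
    (hxg : ∀ i, Tendsto (fun n => f n (x i n)) atTop (𝓝 (g (u i))))
    {K : Set M} (hK : IsCompact K) {ε : ℝ} (hε : 0 < ε) :
    ∀ᶠ n in atTop, ∀ a : X n, F n a ∈ K → |f n a - g (F n a)| < ε := by
  obtain ⟨η₁, hη₁, hFf⟩ := h (ε / 3) (by positivity)
  obtain ⟨η₂, hη₂, hgη⟩ := Metric.uniformContinuous_iff.1 hg (ε / 3) (by positivity)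
  set θ := min η₁ η₂
  have hθ : 0 < θ / 2 := by positivity
  obtain ⟨I, hI⟩ := hK.elim_finite_subcover (fun i => Metric.ball (u i) (θ / 2))
    (fun _ => Metric.isOpen_ball) fun y _ => mem_iUnion.2 (Metric.denseRange_iff.1 hu y _ hθ)
  have hnear : ∀ᶠ n in atTop, ∀ i ∈ I,
      dist (F n (x i n)) (u i) < θ / 2 ∧ dist (f n (x i n)) (g (u i)) < ε / 3 :=
    (eventually_all_finset I).2 fun i _ => (Metric.tendsto_nhds.1 (hxu i) _ hθ).and
      (Metric.tendsto_nhds.1 (hxg i) _ (by positivity))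
  filter_upwards [hFf, hnear] with n hFfn hnear a ha
  obtain ⟨i, hiI, hai : dist (F n a) (u i) < θ / 2⟩ := mem_iUnion₂.1 (hI ha)
  obtain ⟨hxi, hfi⟩ := hnear i hiI
  have hf_close : |f n a - f n (x i n)| < ε / 3 := hFfn a _ <| by
    linarith [dist_triangle_right (F n a) (F n (x i n)) (u i), min_le_left η₁ η₂]
  have hg_close : dist (g (F n a)) (g (u i)) < ε / 3 := hgη <| by linarith [min_le_right η₁ η₂]
  rw [Real.dist_eq] at hfi hg_close
  linarith [abs_sub_le (f n a) (f n (x i n)) (g (u i)), abs_sub_comm (g (F n a)) (g (u i)),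
    abs_sub_le (f n a) (g (u i)) (g (F n a))]

end AsymptoticallyEquicontinuousVia

end AsymptoticallyEquicontinuous

theorem exists_subseq_tendsto_uniformly_on_compacts_general
    {M : Type*} [MetricSpace M] [TopologicalSpace.SeparableSpace M]
    (Mn : ℕ → Type*) [∀ n, MetricSpace (Mn n)]
    (F : ∀ n, Mn n → M)
    -- condition (1) of `limₙ (Mₙ, dₙ, Fₙ) = (M, d)`
    (B : ℝ) (hB : 0 < B) (A : ℕ → ℝ)
    (hA0 : Tendsto A atTop (nhds 0))
    (h1 : ∀ n, ∀ x y : Mn n,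
      B⁻¹ * dist x y - A n ≤ dist (F n x) (F n y) ∧
        dist (F n x) (F n y) ≤ B * dist x y + A n)
    -- condition (2) of `limₙ (Mₙ, dₙ, Fₙ) = (M, d)`
    (h2 : ∀ y : M, ∃ x : ∀ n, Mn n, Tendsto (fun n => F n (x n)) atTop (nhds y))
    (f : ∀ n, Mn n → ℝ)
    -- equicontinuity
    (hequi : ∀ ε > (0 : ℝ), ∃ δ > (0 : ℝ), ∀ n, ∀ x y : Mn n,
      dist x y < δ → |f n x - f n y| < ε)
    -- boundedness on compact sets
    (hbdd : ∀ K : Set M, IsCompact K → ∃ C : ℝ, ∀ n, ∀ x : Mn n, F n x ∈ K → |f n x| ≤ C) :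
    ∃ φ : ℕ → ℕ, StrictMono φ ∧ ∃ g : M → ℝ, Continuous g ∧
      -- `f_{φ k} → g` uniformly on compact sets
      ∀ K : Set M, IsCompact K → ∀ ε > (0 : ℝ), ∃ N : ℕ, ∀ k ≥ N, ∀ x : Mn (φ k),
        F (φ k) x ∈ K → |f (φ k) x - g (F (φ k) x)| < ε := by
  have hFf := asymptoticallyEquicontinuousVia_of_le_dist (inv_pos.2 hB) hA0
    (fun n a b => (h1 n a b).1) hequi
  obtain ⟨D, hD, hDdense⟩ := TopologicalSpace.exists_countable_dense M
  have : Countable D := hD.to_subtype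
  choose x hx using fun y : D => h2 y
  obtain ⟨φ, hφ, L, hL⟩ := exists_strictMono_tendsto_of_forall_bounded (fun n y => f n (x y n))
    fun y => by
      obtain ⟨C, hC⟩ := hbdd _ (hx y).isCompact_insert_range
      exact ⟨C, fun n => hC n _ (mem_insert_of_mem _ (mem_range_self n))⟩
  have hFfφ := hFf.comp_strictMono hφ
  have hxφ : ∀ y : D, Tendsto (fun k => F (φ k) (x y (φ k))) atTop (𝓝 y) :=
    fun y => (hx y).comp hφ.tendsto_atTop
  obtain ⟨g, hg, hgL⟩ := hDdense.denseRange_val.exists_uniformContinuous_comp_eq (L := L)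
    fun ε hε => by
      obtain ⟨η, hη, hL_close⟩ := hFfφ.abs_sub_le_of_tendsto hε
      exact ⟨η, hη, fun y z hyz => hL_close (hxφ y) (hxφ z) (hL y) (hL z) hyz⟩
  refine ⟨φ, hφ, g, hg.continuous, fun K hK ε hε => eventually_atTop.1 ?_⟩
  exact hFfφ.eventually_forall_abs_sub_lt hDdense.denseRange_val hxφ hg
    (fun y => hgL y ▸ hL y) hK hε

/-- Arzelà–Ascoli for a converging sequence of metric spaces: given complete metric
spaces `(Mₙ, dₙ)` with `limₙ (Mₙ, dₙ, Fₙ) = (M, d)`, `M` separable, and an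
equicontinuous family `fₙ : Mₙ → ℝ` which is bounded on compact sets, some
subsequence `f_{n(k)}` converges uniformly on compact sets to a continuous
function on `M`. -/
theorem exists_subseq_tendsto_uniformly_on_compacts
    {M : Type*} [MetricSpace M] [CompleteSpace M] [TopologicalSpace.SeparableSpace M]
    (Mn : ℕ → Type*) [∀ n, MetricSpace (Mn n)] [∀ n, CompleteSpace (Mn n)]
    (F : ∀ n, Mn n → M) (hFcont : ∀ n, Continuous (F n))
    -- condition (1) of `limₙ (Mₙ, dₙ, Fₙ) = (M, d)`
    (B : ℝ) (hB : 0 < B) (A : ℕ → ℝ) (hA : ∀ n, 0 < A n)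
    (hA0 : Tendsto A atTop (nhds 0))
    (h1 : ∀ n, ∀ x y : Mn n,
      B⁻¹ * dist x y - A n ≤ dist (F n x) (F n y) ∧
        dist (F n x) (F n y) ≤ B * dist x y + A n)
    -- condition (2) of `limₙ (Mₙ, dₙ, Fₙ) = (M, d)`
    (h2 : ∀ y : M, ∃ x : ∀ n, Mn n, Tendsto (fun n => F n (x n)) atTop (nhds y))
    (f : ∀ n, Mn n → ℝ)
    -- equicontinuity
    (hequi : ∀ ε > (0 : ℝ), ∃ δ > (0 : ℝ), ∀ n, ∀ x y : Mn n,
      dist x y < δ → |f n x - f n y| < ε)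
    -- boundedness on compact sets
    (hbdd : ∀ K : Set M, IsCompact K → ∃ C : ℝ, ∀ n, ∀ x : Mn n, F n x ∈ K → |f n x| ≤ C) :
    ∃ φ : ℕ → ℕ, StrictMono φ ∧ ∃ g : M → ℝ, Continuous g ∧
      -- `f_{φ k} → g` uniformly on compact sets
      ∀ K : Set M, IsCompact K → ∀ ε > (0 : ℝ), ∃ N : ℕ, ∀ k ≥ N, ∀ x : Mn (φ k),
        F (φ k) x ∈ K → |f (φ k) x - g (F (φ k) x)| < ε :=
  exists_subseq_tendsto_uniformly_on_compacts_general Mn F B hB A hA0 h1 h2 f hequi hbdd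
end

section
/- Let (M_n,d_n), n ∈ ℕ, and (M,d) be complete metric spaces with (M,d) separable, let F_n : M_n → M be continuous maps with lim_n(M_n,d_n,F_n) = (M,d), where B > 0 is the constant in condition (1). Let f_n : M_n → ℝ be functions satisfying |f_n(x) − f_n(y)| ≤ Q·d_n(x,y) for all n and all x,y ∈ M_n (equi-Lipschitz with constant Q), and let f : M → ℝ be a continuous function such that f_n → f uniformly on compact sets. Then f is Lipschitz; in fact |f(x) − f(y)| ≤ Q·B·d(x,y) for all x,y ∈ M. -/
/-!
Pick `xₙ, yₙ ∈ Mₙ` with `Fₙ xₙ → x` and `Fₙ yₙ → y`. Uniform convergence on the compact set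
`{x} ∪ {Fₙ xₙ}` together with continuity of `g` gives `fₙ xₙ → g x`, and likewise for `y`.
The lower bound in condition (1) turns the equi-Lipschitz estimate in `Mₙ` into
`|fₙ xₙ - fₙ yₙ| ≤ Q·B·(d(Fₙ xₙ, Fₙ yₙ) + Aₙ)`, and letting `n → ∞` gives the claim.
-/

open Filter Set Topology

def TendstoUniformlyOnCompactsAlong {M : Type*} [TopologicalSpace M] {Mn : ℕ → Type*}
    (F : ∀ n, Mn n → M) (f : ∀ n, Mn n → ℝ) (g : M → ℝ) : Prop :=
  ∀ K : Set M, IsCompact K → ∀ ε > (0 : ℝ), ∃ N : ℕ, ∀ n ≥ N, ∀ x : Mn n,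
    F n x ∈ K → |f n x - g (F n x)| < ε

theorem TendstoUniformlyOnCompactsAlong.tendsto_apply {M : Type*} [TopologicalSpace M]
    {Mn : ℕ → Type*} {F : ∀ n, Mn n → M} {f : ∀ n, Mn n → ℝ} {g : M → ℝ}
    (h : TendstoUniformlyOnCompactsAlong F f g) (hg : Continuous g) {xs : ∀ n, Mn n} {x : M}
    (hx : Tendsto (fun n => F n (xs n)) atTop (𝓝 x)) :
    Tendsto (fun n => f n (xs n)) atTop (𝓝 (g x)) := by
  have hdiff : Tendsto (fun n => f n (xs n) - g (F n (xs n))) atTop (𝓝 0) := by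
    refine Metric.tendsto_atTop.2 fun ε hε => ?_
    obtain ⟨N, hN⟩ := h _ hx.isCompact_insert_range ε hε
    exact ⟨N, fun n hn => by
      simpa only [Real.dist_eq, sub_zero] using hN n hn (xs n) (mem_insert_of_mem _ ⟨n, rfl⟩)⟩
  simpa only [Function.comp_apply, sub_add_cancel, zero_add] using hdiff.add ((hg.tendsto x).comp hx)

theorem abs_sub_le_of_inv_mul_dist_sub_le {X Y : Type*} [PseudoMetricSpace X]
    [PseudoMetricSpace Y] {f : X → ℝ} {φ : X → Y} {Q B A : ℝ} {a b : X} (hQ : 0 ≤ Q)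
    (hB : 0 < B) (hf : |f a - f b| ≤ Q * dist a b)
    (hφ : B⁻¹ * dist a b - A ≤ dist (φ a) (φ b)) :
    |f a - f b| ≤ Q * B * (dist (φ a) (φ b) + A) := by
  have hdist : dist a b ≤ B * (dist (φ a) (φ b) + A) := by
    rw [inv_mul_eq_div, sub_le_iff_le_add, div_le_iff₀ hB] at hφ
    linarith
  calc |f a - f b| ≤ Q * dist a b := hf
    _ ≤ Q * (B * (dist (φ a) (φ b) + A)) := mul_le_mul_of_nonneg_left hdist hQ
    _ = Q * B * (dist (φ a) (φ b) + A) := (mul_assoc _ _ _).symm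

theorem lipschitz_of_limit_equiLipschitz_general
    {M : Type*} [MetricSpace M]
    (Mn : ℕ → Type*) [∀ n, MetricSpace (Mn n)]
    (F : ∀ n, Mn n → M)
    -- condition (1) of `limₙ (Mₙ, dₙ, Fₙ) = (M, d)`
    (B : ℝ) (hB : 0 < B) (A : ℕ → ℝ)
    (hA0 : Tendsto A atTop (nhds 0))
    (h1 : ∀ n, ∀ x y : Mn n,
      B⁻¹ * dist x y - A n ≤ dist (F n x) (F n y) ∧
        dist (F n x) (F n y) ≤ B * dist x y + A n)
    -- condition (2) of `limₙ (Mₙ, dₙ, Fₙ) = (M, d)`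
    (h2 : ∀ y : M, ∃ x : ∀ n, Mn n, Tendsto (fun n => F n (x n)) atTop (nhds y))
    (f : ∀ n, Mn n → ℝ) (Q : ℝ)
    -- equi-Lipschitz with constant `Q`
    (hlip : ∀ n, ∀ x y : Mn n, |f n x - f n y| ≤ Q * dist x y)
    (g : M → ℝ) (hg : Continuous g)
    -- `fₙ → g` uniformly on compact sets
    (hconv : ∀ K : Set M, IsCompact K → ∀ ε > (0 : ℝ), ∃ N : ℕ, ∀ n ≥ N, ∀ x : Mn n,
      F n x ∈ K → |f n x - g (F n x)| < ε) :
    ∀ x y : M, |g x - g y| ≤ Q * B * dist x y := by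
  intro x y
  rcases eq_or_ne x y with rfl | hxy
  · simp
  obtain ⟨xs, hxs⟩ := h2 x
  obtain ⟨ys, hys⟩ := h2 y
  have hdist := hxs.dist hys
  have hQ : 0 ≤ Q := by
    obtain ⟨n, hn⟩ := (hdist.eventually (lt_mem_nhds (dist_pos.2 hxy))).exists
    have hne : xs n ≠ ys n := fun h => by simp [h] at hn
    exact nonneg_of_mul_nonneg_left ((abs_nonneg _).trans (hlip n _ _)) (dist_pos.2 hne)
  have hlhs := ((TendstoUniformlyOnCompactsAlong.tendsto_apply hconv hg hxs).sub
    (TendstoUniformlyOnCompactsAlong.tendsto_apply hconv hg hys)).abs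
  have hrhs := (hdist.add hA0).const_mul (Q * B)
  have hle := le_of_tendsto_of_tendsto' hlhs hrhs fun n =>
    abs_sub_le_of_inv_mul_dist_sub_le hQ hB (hlip n _ _) (h1 n _ _).1
  simpa only [add_zero] using hle

/-- If `limₙ (Mₙ, dₙ, Fₙ) = (M, d)` (with constant `B` in condition (1)),
the functions `fₙ : Mₙ → ℝ` are equi-Lipschitz with constant `Q`, and
`fₙ → f` uniformly on compact sets with `f` continuous, then `f` is Lipschitz:
`|f x − f y| ≤ Q·B·d(x,y)` for all `x, y ∈ M`. -/
theorem lipschitz_of_limit_equiLipschitz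
    {M : Type*} [MetricSpace M] [CompleteSpace M] [TopologicalSpace.SeparableSpace M]
    (Mn : ℕ → Type*) [∀ n, MetricSpace (Mn n)] [∀ n, CompleteSpace (Mn n)]
    (F : ∀ n, Mn n → M) (hFcont : ∀ n, Continuous (F n))
    -- condition (1) of `limₙ (Mₙ, dₙ, Fₙ) = (M, d)`
    (B : ℝ) (hB : 0 < B) (A : ℕ → ℝ) (hA : ∀ n, 0 < A n)
    (hA0 : Tendsto A atTop (nhds 0))
    (h1 : ∀ n, ∀ x y : Mn n,
      B⁻¹ * dist x y - A n ≤ dist (F n x) (F n y) ∧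
        dist (F n x) (F n y) ≤ B * dist x y + A n)
    -- condition (2) of `limₙ (Mₙ, dₙ, Fₙ) = (M, d)`
    (h2 : ∀ y : M, ∃ x : ∀ n, Mn n, Tendsto (fun n => F n (x n)) atTop (nhds y))
    (f : ∀ n, Mn n → ℝ) (Q : ℝ)
    -- equi-Lipschitz with constant `Q`
    (hlip : ∀ n, ∀ x y : Mn n, |f n x - f n y| ≤ Q * dist x y)
    (g : M → ℝ) (hg : Continuous g)
    -- `fₙ → g` uniformly on compact sets
    (hconv : ∀ K : Set M, IsCompact K → ∀ ε > (0 : ℝ), ∃ N : ℕ, ∀ n ≥ N, ∀ x : Mn n,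
      F n x ∈ K → |f n x - g (F n x)| < ε) :
    ∀ x y : M, |g x - g y| ≤ Q * B * dist x y :=
  lipschitz_of_limit_equiLipschitz_general Mn F B hB A hA0 h1 h2 f Q hlip g hg hconv
end

section
/- (Uniqueness of Lipschitz viscosity solutions, torus case.) Let H : ℝⁿ × ℝⁿ → ℝ be C², ℤⁿ-periodic in x (H(x+k,p) = H(x,p) for all k ∈ ℤⁿ), convex in p (the Hessian ∂²H/∂p∂p(x,p) is positive definite for all (x,p)), and superlinear in p: H(x,p)/|p| → ∞ as |p| → ∞, uniformly in x. Let f : ℝⁿ → ℝ be Lipschitz. Then there is at most one Lipschitz function u : ℝⁿ × [0,∞) → ℝ which is a viscosity solution of ∂_t u + H(x, ∂_x u) = 0 on ℝⁿ × (0,∞) and satisfies u(x,0) = f(x) for all x ∈ ℝⁿ. -/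
/-!
Suppose `u - v` is positive somewhere. Maximize, over `t, s ≥ 0`, the doubled function
`u (x, t) - v (y, s) - λ (t + t²) - W (‖x - y‖² + (t - s)²) - δ (‖x‖² + ‖y‖²)`; it is coercive, so
the maximum is attained. Comparing with its value on the diagonal gives
`W (‖x - y‖ + |t - s|) ≤ 2 (C + δ (‖x‖ + ‖y‖))` for a common Lipschitz constant `C`, so for `W`
large the maximum cannot lie on `t = 0` or `s = 0`, where the initial data are ordered. At an
interior maximum, testing `u` from above and `v` from below with the quadratic part of the doubled
function gives `λ ≤ H (y, p₂) - H (x, p₁)` with bounded momenta and `‖p₁ - p₂‖ ≤ 2 δ (‖x‖ + ‖y‖)`.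
By periodicity and `C¹` regularity, `H` is Lipschitz on bounded momenta uniformly in `x`, so the
right side is below `λ` once `W` is large and `δ` small. This comparison, applied both ways, gives
uniqueness.
-/

open Set Topology

noncomputable section

/-- `u` is a viscosity subsolution of `∂ₜu + G(x, ∂ₓu) = 0` on `U ⊆ ℝⁿ × ℝ`. -/
def IsViscositySubsolutionOn {n : ℕ}
    (G : EuclideanSpace ℝ (Fin n) → EuclideanSpace ℝ (Fin n) → ℝ)
    (u : EuclideanSpace ℝ (Fin n) × ℝ → ℝ)
    (U : Set (EuclideanSpace ℝ (Fin n) × ℝ)) : Prop :=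
  ∀ φ : EuclideanSpace ℝ (Fin n) × ℝ → ℝ, ContDiff ℝ 1 φ →
    ∀ p₀ ∈ U, IsLocalMaxOn (fun p => u p - φ p) U p₀ →
      deriv (fun t => φ (p₀.1, t)) p₀.2 +
        G p₀.1 (gradient (fun x => φ (x, p₀.2)) p₀.1) ≤ 0

/-- `u` is a viscosity supersolution of `∂ₜu + G(x, ∂ₓu) = 0` on `U ⊆ ℝⁿ × ℝ`. -/
def IsViscositySupersolutionOn {n : ℕ}
    (G : EuclideanSpace ℝ (Fin n) → EuclideanSpace ℝ (Fin n) → ℝ)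
    (u : EuclideanSpace ℝ (Fin n) × ℝ → ℝ)
    (U : Set (EuclideanSpace ℝ (Fin n) × ℝ)) : Prop :=
  ∀ φ : EuclideanSpace ℝ (Fin n) × ℝ → ℝ, ContDiff ℝ 1 φ →
    ∀ p₀ ∈ U, IsLocalMinOn (fun p => u p - φ p) U p₀ →
      0 ≤ deriv (fun t => φ (p₀.1, t)) p₀.2 +
        G p₀.1 (gradient (fun x => φ (x, p₀.2)) p₀.1)

open Filter NNReal

lemma mul_le_of_mul_sq_le {a c W : ℝ} (ha : 0 ≤ a) (hc : 0 ≤ c) (h : W * a ^ 2 ≤ c * a) :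
    W * a ≤ c := by
  rcases ha.eq_or_lt with rfl | ha
  · simpa using hc
  · exact le_of_mul_le_mul_right (by nlinarith) ha

lemma eventually_mul_lt_nhdsGT (A : ℝ) {B : ℝ} (hB : 0 < B) : ∀ᶠ d in 𝓝[>] (0 : ℝ), d * A < B :=
  (((continuous_id.mul continuous_const).tendsto' 0 0 (zero_mul A)).eventually
    (gt_mem_nhds hB)).filter_mono nhdsWithin_le_nhds

section Periodic

variable {n : ℕ}

lemma norm_sub_floor_le (x : EuclideanSpace ℝ (Fin n)) :
    ‖x - WithLp.toLp 2 (fun i => (⌊x i⌋ : ℝ))‖ ≤ √n := by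
  rw [EuclideanSpace.norm_eq]
  refine Real.sqrt_le_sqrt ?_
  calc ∑ i, ‖(x - WithLp.toLp 2 (fun i => (⌊x i⌋ : ℝ))) i‖ ^ 2 ≤ ∑ _i : Fin n, (1 : ℝ) := by
        gcongr with i
        have : (x - WithLp.toLp 2 (fun i => (⌊x i⌋ : ℝ))) i = Int.fract (x i) := rfl
        rw [this, Real.norm_eq_abs, abs_of_nonneg (Int.fract_nonneg _)]
        exact pow_le_one₀ (Int.fract_nonneg _) (Int.fract_lt_one _).le
    _ = n := by simp

theorem exists_lipschitz_bound_of_periodic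
    {H : EuclideanSpace ℝ (Fin n) × EuclideanSpace ℝ (Fin n) → ℝ} (hH : ContDiff ℝ 1 H)
    (hper : ∀ (k : Fin n → ℤ) (x p : EuclideanSpace ℝ (Fin n)),
      H (x + WithLp.toLp 2 (fun i => (k i : ℝ)), p) = H (x, p))
    (R : ℝ) :
    ∃ M, 0 ≤ M ∧ ∀ x y p q : EuclideanSpace ℝ (Fin n), ‖p‖ ≤ R → ‖q‖ ≤ R → ‖x - y‖ ≤ 1 →
      |H (x, p) - H (y, q)| ≤ M * (‖x - y‖ + ‖p - q‖) := by
  set Q := Metric.closedBall (0 : EuclideanSpace ℝ (Fin n)) (√n + 1) ×ˢ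
    Metric.closedBall (0 : EuclideanSpace ℝ (Fin n)) R
  obtain ⟨M, hM⟩ := ((isCompact_closedBall _ _).prod (isCompact_closedBall _ _) :
    IsCompact Q).exists_bound_of_continuousOn (hH.continuous_fderiv one_ne_zero).continuousOn
  refine ⟨max M 0, le_max_right _ _, fun x y p q hp hq hxy => ?_⟩
  -- translate `x` into the unit cell; `y` then stays in a fixed compact set
  set k : EuclideanSpace ℝ (Fin n) := WithLp.toLp 2 (fun i => (⌊x i⌋ : ℝ))
  have hper' : ∀ z r, H (z, r) = H (z - k, r) := fun z r => by
    rw [← hper (fun i => ⌊x i⌋) (z - k) r, sub_add_cancel]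
  have hx : ‖x - k‖ ≤ √n := norm_sub_floor_le x
  have hy : ‖y - k‖ ≤ √n + 1 := by
    calc ‖y - k‖ = ‖(x - k) - (x - y)‖ := by congr 1; abel
      _ ≤ ‖x - k‖ + ‖x - y‖ := norm_sub_le _ _
      _ ≤ √n + 1 := by linarith
  have hxQ : (x - k, p) ∈ Q := ⟨by simpa using hx.trans (by linarith), by simpa using hp⟩
  have hyQ : (y - k, q) ∈ Q := ⟨by simpa using hy, by simpa using hq⟩
  have hmvt :=
    ((convex_closedBall _ _).prod (convex_closedBall _ _)).norm_image_sub_le_of_norm_fderiv_le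
      (fun z _ => (hH.differentiable one_ne_zero) z)
      (fun z hz => (hM z hz).trans (le_max_left M 0)) hyQ hxQ
  rw [hper' x, hper' y, ← Real.norm_eq_abs]
  refine hmvt.trans (mul_le_mul_of_nonneg_left ?_ (le_max_right _ _))
  rw [Prod.mk_sub_mk, sub_sub_sub_cancel_right, Prod.norm_def]
  exact max_le_add_of_nonneg (norm_nonneg _) (norm_nonneg _)

end Periodic

section QuadraticTest

variable {E : Type*} [NormedAddCommGroup E]

-- With `W, d < 0` this is also the test function touching `v` from below in the doubling argument.
def quadraticTest (a W d : ℝ) (x₁ : E) (t₁ : ℝ) (p : E × ℝ) : ℝ :=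
  a * (p.2 + p.2 ^ 2) + W * (‖p.1 - x₁‖ ^ 2 + (p.2 - t₁) ^ 2) + d * ‖p.1‖ ^ 2

variable {a W d : ℝ} {x₁ : E} {t₁ : ℝ}

lemma deriv_quadraticTest_snd (x : E) (t : ℝ) :
    deriv (fun s => quadraticTest a W d x₁ t₁ (x, s)) t = a * (1 + 2 * t) + 2 * W * (t - t₁) := by
  have h₁ := ((hasDerivAt_id t).add ((hasDerivAt_id t).pow 2)).const_mul a
  have h₂ := ((((hasDerivAt_id t).sub_const t₁).pow 2).const_add (‖x - x₁‖ ^ 2)).const_mul W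
  have h : HasDerivAt (fun s => quadraticTest a W d x₁ t₁ (x, s))
      (a * (1 + 2 * t) + 2 * W * (t - t₁)) t :=
    ((h₁.add h₂).add_const (d * ‖x‖ ^ 2)).congr_deriv (by simp only [id]; ring)
  exact h.deriv

variable [InnerProductSpace ℝ E]

lemma contDiff_quadraticTest : ContDiff ℝ 1 (quadraticTest a W d x₁ t₁) := by
  have hx₁ : ContDiff ℝ 1 fun p : E × ℝ => ‖p.1 - x₁‖ ^ 2 :=
    (contDiff_fst.sub contDiff_const).norm_sq ℝ
  have hx : ContDiff ℝ 1 fun p : E × ℝ => ‖p.1‖ ^ 2 := contDiff_fst.norm_sq ℝ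
  unfold quadraticTest
  fun_prop

lemma gradient_quadraticTest_fst [CompleteSpace E] (x : E) (t : ℝ) :
    gradient (fun y => quadraticTest a W d x₁ t₁ (y, t)) x = (2 * W) • (x - x₁) + (2 * d) • x := by
  have h₁ := (((hasFDerivAt_id x).sub_const x₁).norm_sq.add_const ((t - t₁) ^ 2)).const_mul W
  have h₂ := (hasFDerivAt_id x).norm_sq.const_mul d
  have h : HasGradientAt (fun y => quadraticTest a W d x₁ t₁ (y, t))
      ((2 * W) • (x - x₁) + (2 * d) • x) x := by
    rw [hasGradientAt_iff_hasFDerivAt]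
    refine ((h₁.const_add (a * (t + t ^ 2))).add h₂).congr_fderiv ?_
    ext y
    simp
    ring
  exact h.gradient

end QuadraticTest

section Doubling

variable {E : Type*} [NormedAddCommGroup E]

def doubling (u v : E × ℝ → ℝ) (lam W d : ℝ) (z w : E × ℝ) : ℝ :=
  u z - v w - lam * (z.2 + z.2 ^ 2) - W * (‖z.1 - w.1‖ ^ 2 + (z.2 - w.2) ^ 2) -
    d * (‖z.1‖ ^ 2 + ‖w.1‖ ^ 2)

variable {u v : E × ℝ → ℝ} {C : ℝ≥0} {lam W d : ℝ}

lemma LipschitzOnWith.sub_le_of_nonneg (hu : LipschitzOnWith C u {p | 0 ≤ p.2}) {z w : E × ℝ}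
    (hz : 0 ≤ z.2) (hw : 0 ≤ w.2) :
    u z - u w ≤ C * (‖z.1 - w.1‖ + |z.2 - w.2|) :=
  calc u z - u w ≤ dist (u z) (u w) := le_abs_self _
    _ ≤ C * dist z w := hu.dist_le_mul z hz w hw
    _ ≤ C * (‖z.1 - w.1‖ + |z.2 - w.2|) := by
      rw [Prod.dist_eq, dist_eq_norm, Real.dist_eq]
      gcongr
      exact max_le_add_of_nonneg (norm_nonneg _) (abs_nonneg _)

lemma sub_le_of_initial_le (hu : LipschitzOnWith C u {p | 0 ≤ p.2})
    (hv : LipschitzOnWith C v {p | 0 ≤ p.2})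
    (h0 : ∀ x, u (x, 0) ≤ v (x, 0)) {z w : E × ℝ} (hz : 0 ≤ z.2) (hw : 0 ≤ w.2) :
    u z - v w ≤ 2 * C * z.2 + C * (‖z.1 - w.1‖ + |z.2 - w.2|) := by
  have hu0 := hu.sub_le_of_nonneg (w := (z.1, 0)) hz le_rfl
  have hv0 := hv.sub_le_of_nonneg (z := (z.1, 0)) le_rfl hz
  have hvw := hv.sub_le_of_nonneg hz hw
  simp only [sub_self, norm_zero, sub_zero, zero_sub, abs_neg, abs_of_nonneg hz, zero_add]
    at hu0 hv0
  linarith [h0 z.1]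

lemma doubling_eq_sub_quadraticTest (z w : E × ℝ) :
    doubling u v lam W d z w = u z - quadraticTest lam W d w.1 w.2 z - (v w + d * ‖w.1‖ ^ 2) := by
  unfold doubling quadraticTest
  ring

lemma doubling_eq_quadraticTest_sub (z w : E × ℝ) :
    doubling u v lam W d z w =
      quadraticTest 0 (-W) (-d) z.1 z.2 w - v w +
        (u z - lam * (z.2 + z.2 ^ 2) - d * ‖z.1‖ ^ 2) := by
  unfold doubling quadraticTest
  rw [norm_sub_rev w.1]
  ring

lemma doubling_le (hu : LipschitzOnWith C u {p | 0 ≤ p.2}) (hv : LipschitzOnWith C v {p | 0 ≤ p.2})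
    (h0 : ∀ x, u (x, 0) ≤ v (x, 0)) (hlam : 0 < lam) (hW : 1 ≤ W) {z w : E × ℝ}
    (hz : 0 ≤ z.2) (hw : 0 ≤ w.2) :
    doubling u v lam W d z w ≤ 2 * C ^ 2 / lam + C ^ 2 - lam / 2 * z.2 ^ 2 -
      1 / 2 * (z.2 - w.2) ^ 2 - d * (‖z.1‖ ^ 2 + ‖w.1‖ ^ 2) := by
  have huv := sub_le_of_initial_le hu hv h0 hz hw
  have ht : 2 * C * z.2 ≤ 2 * C ^ 2 / lam + lam / 2 * z.2 ^ 2 := by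
    rw [← sub_nonneg]
    have : 2 * C ^ 2 / lam + lam / 2 * z.2 ^ 2 - 2 * C * z.2 =
        (lam * z.2 - 2 * C) ^ 2 / (2 * lam) := by
      field_simp
      ring
    rw [this]
    positivity
  have hx : C * ‖z.1 - w.1‖ ≤ W * ‖z.1 - w.1‖ ^ 2 + C ^ 2 / 2 := by
    nlinarith [sq_nonneg (‖z.1 - w.1‖ - C), sq_nonneg ‖z.1 - w.1‖]
  have hs : C * |z.2 - w.2| ≤ (W - 1 / 2) * (z.2 - w.2) ^ 2 + C ^ 2 / 2 := by
    rw [← sq_abs (z.2 - w.2)]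
    nlinarith [sq_nonneg (|z.2 - w.2| - C), sq_nonneg |z.2 - w.2|]
  unfold doubling
  nlinarith [mul_nonneg hlam.le hz]

lemma norm_prod_sq_le {x y : E} {t s : ℝ} (ht : 0 ≤ t) (hs : 0 ≤ s) :
    ‖((x, t), (y, s))‖ ^ 2 ≤ ‖x‖ ^ 2 + ‖y‖ ^ 2 + 3 * t ^ 2 + 2 * (t - s) ^ 2 := by
  have hs2 : s ^ 2 ≤ 2 * t ^ 2 + 2 * (t - s) ^ 2 := by nlinarith [sq_nonneg (t + (t - s))]
  simp only [Prod.norm_def, Real.norm_eq_abs, abs_of_nonneg ht, abs_of_nonneg hs]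
  rcases max_choice (max ‖x‖ t) (max ‖y‖ s) with h | h <;> rw [h]
  · rcases max_choice ‖x‖ t with h | h <;> rw [h] <;> nlinarith [sq_nonneg ‖y‖, sq_nonneg (t - s)]
  · rcases max_choice ‖y‖ s with h | h <;> rw [h] <;> nlinarith [sq_nonneg ‖x‖, sq_nonneg (t - s)]

lemma exists_isMaxOn_doubling [ProperSpace E] (hu : LipschitzOnWith C u {p | 0 ≤ p.2})
    (hv : LipschitzOnWith C v {p | 0 ≤ p.2}) (h0 : ∀ x, u (x, 0) ≤ v (x, 0)) (hlam : 0 < lam)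
    (hW : 1 ≤ W) (hd : 0 < d) :
    ∃ m ∈ {p : E × ℝ | 0 ≤ p.2} ×ˢ {p : E × ℝ | 0 ≤ p.2},
      IsMaxOn (Function.uncurry (doubling u v lam W d)) ({p | 0 ≤ p.2} ×ˢ {p | 0 ≤ p.2}) m := by
  set S : Set (E × ℝ) := {p | 0 ≤ p.2}
  set K := 2 * C ^ 2 / lam + C ^ 2
  have hS : IsClosed S := isClosed_le continuous_const continuous_snd
  have hcont : ContinuousOn (Function.uncurry (doubling u v lam W d)) (S ×ˢ S) := by
    have hu' : ContinuousOn (fun q : (E × ℝ) × (E × ℝ) => u q.1) (S ×ˢ S) :=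
      hu.continuousOn.comp continuousOn_fst fun q hq => hq.1
    have hv' : ContinuousOn (fun q : (E × ℝ) × (E × ℝ) => v q.2) (S ×ˢ S) :=
      hv.continuousOn.comp continuousOn_snd fun q hq => hq.2
    unfold Function.uncurry doubling
    refine (((hu'.sub hv').sub ?_).sub ?_).sub ?_ <;> exact Continuous.continuousOn (by fun_prop)
  -- away from a compact set the doubled function lies below its value at the origin
  set ε := min d (min (lam / 6) (1 / 4))
  have hε : 0 < ε := lt_min hd (lt_min (by positivity) (by norm_num))
  have hcoercive : ∀ q ∈ S ×ˢ S, ε * ‖q‖ ^ 2 ≤ K - Function.uncurry (doubling u v lam W d) q := by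
    rintro ⟨⟨x, t⟩, ⟨y, s⟩⟩ ⟨ht, hs⟩
    have h₁ := doubling_le (d := d) hu hv h0 hlam hW ht hs
    have h₂ := norm_prod_sq_le (x := x) (y := y) ht hs
    have hεd : ε ≤ d := min_le_left _ _
    have hεl : ε ≤ lam / 6 := (min_le_right _ _).trans (min_le_left _ _)
    have hε4 : ε ≤ 1 / 4 := (min_le_right _ _).trans (min_le_right _ _)
    simp only [Function.uncurry_apply_pair]
    nlinarith [mul_le_mul_of_nonneg_left h₂ hε.le, mul_le_mul_of_nonneg_right hεd
      (add_nonneg (sq_nonneg ‖x‖) (sq_nonneg ‖y‖)), mul_le_mul_of_nonneg_right hεl (sq_nonneg t),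
      mul_le_mul_of_nonneg_right hε4 (sq_nonneg (t - s))]
  have hfar : ∀ᶠ q in cocompact ((E × ℝ) × (E × ℝ)),
      K - Function.uncurry (doubling u v lam W d) ((0, 0), (0, 0)) < ε * ‖q‖ ^ 2 :=
    (((tendsto_pow_atTop two_ne_zero).comp tendsto_norm_cocompact_atTop).const_mul_atTop
      hε).eventually_gt_atTop _
  refine hcont.exists_isMaxOn' (hS.prod hS) (x₀ := ((0, 0), (0, 0))) (by simp [S]) ?_
  filter_upwards [hfar.filter_mono inf_le_left, mem_inf_of_right (mem_principal_self _)]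
    with q hq hqS
  linarith [hcoercive q hqS]

lemma mul_add_le_of_isMaxOn_doubling (hv : LipschitzOnWith C v {p | 0 ≤ p.2}) (hW : 0 ≤ W)
    (hd : 0 ≤ d) {z w : E × ℝ} (hz : 0 ≤ z.2) (hw : 0 ≤ w.2)
    (hmax : IsMaxOn (Function.uncurry (doubling u v lam W d)) ({p | 0 ≤ p.2} ×ˢ {p | 0 ≤ p.2})
      (z, w)) :
    W * (‖z.1 - w.1‖ + |z.2 - w.2|) ≤ 2 * (C + d * (‖z.1‖ + ‖w.1‖)) := by
  set a := ‖z.1 - w.1‖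
  set b := |z.2 - w.2|
  have hself : doubling u v lam W d z z ≤ doubling u v lam W d z w := hmax (Set.mk_mem_prod hz hz)
  have hvzw := hv.sub_le_of_nonneg hz hw
  have hnorm : d * (‖z.1‖ ^ 2 - ‖w.1‖ ^ 2) ≤ d * (‖z.1‖ + ‖w.1‖) * a := by
    have := norm_sub_norm_le z.1 w.1
    nlinarith [mul_nonneg hd (add_nonneg (norm_nonneg z.1) (norm_nonneg w.1))]
  have hkey : W * (a ^ 2 + b ^ 2) ≤ (C + d * (‖z.1‖ + ‖w.1‖)) * (a + b) := by
    unfold doubling at hself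
    rw [← sq_abs (z.2 - w.2)] at hself
    simp only [sub_self, norm_zero] at hself
    nlinarith [mul_nonneg (mul_nonneg hd (add_nonneg (norm_nonneg z.1) (norm_nonneg w.1)))
      (abs_nonneg (z.2 - w.2))]
  refine mul_le_of_mul_sq_le (by positivity) (by positivity) ?_
  nlinarith [mul_nonneg hW (sq_nonneg (a - b))]

lemma doubling_le_of_boundary (hu : LipschitzOnWith C u {p | 0 ≤ p.2})
    (hv : LipschitzOnWith C v {p | 0 ≤ p.2}) (h0 : ∀ x, u (x, 0) ≤ v (x, 0)) (hlam : 0 ≤ lam)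
    (hW : 0 ≤ W) (hd : 0 ≤ d) {z w : E × ℝ} (hz : 0 ≤ z.2) (hw : 0 ≤ w.2)
    (hzw : z.2 = 0 ∨ w.2 = 0) :
    doubling u v lam W d z w ≤ C * (‖z.1 - w.1‖ + |z.2 - w.2|) := by
  have huv : u z - v w ≤ C * (‖z.1 - w.1‖ + |z.2 - w.2|) := by
    rcases hzw with h | h
    · have := h0 z.1
      rw [← h] at this
      linarith [hv.sub_le_of_nonneg hz hw]
    · have := h0 w.1
      rw [← h] at this
      linarith [hu.sub_le_of_nonneg hz hw]
  unfold doubling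
  have : 0 ≤ z.2 + z.2 ^ 2 := by positivity
  nlinarith [mul_nonneg hlam this,
    mul_nonneg hW (add_nonneg (sq_nonneg ‖z.1 - w.1‖) (sq_nonneg (z.2 - w.2))),
    mul_nonneg hd (add_nonneg (sq_nonneg ‖z.1‖) (sq_nonneg ‖w.1‖))]

lemma sq_mul_norm_add_norm_le (hu : LipschitzOnWith C u {p | 0 ≤ p.2})
    (hv : LipschitzOnWith C v {p | 0 ≤ p.2}) (h0 : ∀ x, u (x, 0) ≤ v (x, 0)) (hlam : 0 < lam)
    (hW : 1 ≤ W) (hd : 0 ≤ d) {z w : E × ℝ} (hz : 0 ≤ z.2) (hw : 0 ≤ w.2)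
    (hpos : 0 ≤ doubling u v lam W d z w) :
    (d * (‖z.1‖ + ‖w.1‖)) ^ 2 ≤ 2 * d * (2 * C ^ 2 / lam + C ^ 2) := by
  have hbound := doubling_le (d := d) hu hv h0 hlam hW hz hw
  have hdK : d * (‖z.1‖ ^ 2 + ‖w.1‖ ^ 2) ≤ 2 * C ^ 2 / lam + C ^ 2 := by
    nlinarith [sq_nonneg z.2, sq_nonneg (z.2 - w.2)]
  nlinarith [mul_le_mul_of_nonneg_left hdK (by positivity : (0 : ℝ) ≤ 2 * d),
    mul_nonneg (sq_nonneg d) (sq_nonneg (‖z.1‖ - ‖w.1‖))]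

end Doubling

section Viscosity

variable {n : ℕ} {H : EuclideanSpace ℝ (Fin n) × EuclideanSpace ℝ (Fin n) → ℝ}
  {u v : EuclideanSpace ℝ (Fin n) × ℝ → ℝ} {lam W d : ℝ} {z w : EuclideanSpace ℝ (Fin n) × ℝ}

lemma add_le_of_isMaxOn_doubling
    (husub : IsViscositySubsolutionOn (fun x p => H (x, p)) u {p | 0 < p.2})
    (hvsup : IsViscositySupersolutionOn (fun x p => H (x, p)) v {p | 0 < p.2}) (hlam : 0 ≤ lam)
    (hz : 0 < z.2) (hw : 0 < w.2)
    (hmax : IsMaxOn (Function.uncurry (doubling u v lam W d)) ({p | 0 ≤ p.2} ×ˢ {p | 0 ≤ p.2})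
      (z, w)) :
    lam + H (z.1, (2 * W) • (z.1 - w.1) + (2 * d) • z.1) ≤
      H (w.1, (2 * W) • (z.1 - w.1) - (2 * d) • w.1) := by
  have hmax_u : IsLocalMaxOn (fun p => u p - quadraticTest lam W d w.1 w.2 p) {p | 0 < p.2} z :=
    IsMaxOn.localize <| isMaxOn_iff.2 fun p (hp : 0 < p.2) => by
      have : doubling u v lam W d p w ≤ doubling u v lam W d z w :=
        hmax (Set.mk_mem_prod hp.le hw.le)
      rw [doubling_eq_sub_quadraticTest, doubling_eq_sub_quadraticTest] at this
      linarith
  have hmin_v : IsLocalMinOn (fun p => v p - quadraticTest 0 (-W) (-d) z.1 z.2 p) {p | 0 < p.2} w :=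
    IsMinOn.localize <| isMinOn_iff.2 fun p (hp : 0 < p.2) => by
      have : doubling u v lam W d z p ≤ doubling u v lam W d z w :=
        hmax (Set.mk_mem_prod hz.le hp.le)
      rw [doubling_eq_quadraticTest_sub, doubling_eq_quadraticTest_sub] at this
      linarith
  have hsub := husub _ contDiff_quadraticTest z hz hmax_u
  have hsup := hvsup _ contDiff_quadraticTest w hw hmin_v
  rw [deriv_quadraticTest_snd, gradient_quadraticTest_fst] at hsub hsup
  have hp : (2 * -W) • (w.1 - z.1) + (2 * -d) • w.1 = (2 * W) • (z.1 - w.1) - (2 * d) • w.1 := by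
    module
  rw [hp] at hsup
  nlinarith [mul_nonneg hlam hz.le]

lemma lam_le_of_isMaxOn_doubling {M R : ℝ} (hM0 : 0 ≤ M)
    (hM : ∀ x y p q : EuclideanSpace ℝ (Fin n), ‖p‖ ≤ R → ‖q‖ ≤ R → ‖x - y‖ ≤ 1 →
      |H (x, p) - H (y, q)| ≤ M * (‖x - y‖ + ‖p - q‖))
    (husub : IsViscositySubsolutionOn (fun x p => H (x, p)) u {p | 0 < p.2})
    (hvsup : IsViscositySupersolutionOn (fun x p => H (x, p)) v {p | 0 < p.2}) (hlam : 0 ≤ lam)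
    (hW : 0 ≤ W) (hd : 0 ≤ d) (hz : 0 < z.2) (hw : 0 < w.2)
    (hmax : IsMaxOn (Function.uncurry (doubling u v lam W d)) ({p | 0 ≤ p.2} ×ˢ {p | 0 ≤ p.2})
      (z, w))
    (hzw : ‖z.1 - w.1‖ ≤ 1) (hR : 2 * W * ‖z.1 - w.1‖ + 2 * d * (‖z.1‖ + ‖w.1‖) ≤ R) :
    lam ≤ M * (‖z.1 - w.1‖ + 2 * d * (‖z.1‖ + ‖w.1‖)) := by
  have hvisc := add_le_of_isMaxOn_doubling husub hvsup hlam hz hw hmax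
  set p₁ := (2 * W) • (z.1 - w.1) + (2 * d) • z.1
  set p₂ := (2 * W) • (z.1 - w.1) - (2 * d) • w.1
  have hnorm : ∀ c : ℝ, 0 ≤ c → ∀ x : EuclideanSpace ℝ (Fin n), ‖c • x‖ = c * ‖x‖ :=
    fun c hc x => by rw [norm_smul, Real.norm_of_nonneg hc]
  have hp₁ : ‖p₁‖ ≤ R := by
    refine (norm_add_le _ _).trans ?_
    rw [hnorm _ (by positivity), hnorm _ (by positivity)]
    nlinarith [mul_nonneg hd (norm_nonneg w.1)]
  have hp₂ : ‖p₂‖ ≤ R := by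
    refine (norm_sub_le _ _).trans ?_
    rw [hnorm _ (by positivity), hnorm _ (by positivity)]
    nlinarith [mul_nonneg hd (norm_nonneg z.1)]
  have hp₁₂ : ‖p₂ - p₁‖ ≤ 2 * d * (‖z.1‖ + ‖w.1‖) := by
    have : p₂ - p₁ = -((2 * d) • (z.1 + w.1)) := by
      simp only [p₁, p₂]
      module
    rw [this, norm_neg, hnorm _ (by positivity)]
    exact mul_le_mul_of_nonneg_left (norm_add_le _ _) (by positivity)
  have hH := (le_abs_self _).trans (hM w.1 z.1 p₂ p₁ hp₂ hp₁ (by rwa [norm_sub_rev]))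
  rw [norm_sub_rev w.1] at hH
  nlinarith [mul_le_mul_of_nonneg_left hp₁₂ hM0]

end Viscosity

theorem comparison_principle {n : ℕ} {H : EuclideanSpace ℝ (Fin n) × EuclideanSpace ℝ (Fin n) → ℝ}
    (hH : ∀ R : ℝ, ∃ M, 0 ≤ M ∧ ∀ x y p q : EuclideanSpace ℝ (Fin n), ‖p‖ ≤ R → ‖q‖ ≤ R →
      ‖x - y‖ ≤ 1 → |H (x, p) - H (y, q)| ≤ M * (‖x - y‖ + ‖p - q‖))
    {u v : EuclideanSpace ℝ (Fin n) × ℝ → ℝ} {C : ℝ≥0}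
    (hu : LipschitzOnWith C u {p | 0 ≤ p.2}) (hv : LipschitzOnWith C v {p | 0 ≤ p.2})
    (husub : IsViscositySubsolutionOn (fun x p => H (x, p)) u {p | 0 < p.2})
    (hvsup : IsViscositySupersolutionOn (fun x p => H (x, p)) v {p | 0 < p.2})
    (h0 : ∀ x, u (x, 0) ≤ v (x, 0)) {p₀ : EuclideanSpace ℝ (Fin n) × ℝ} (hp₀ : 0 ≤ p₀.2) :
    u p₀ ≤ v p₀ := by
  by_contra! hlt
  set σ := u p₀ - v p₀
  have hσ : 0 < σ := sub_pos.2 hlt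
  obtain ⟨M, hM0, hM⟩ := hH (4 * C + 6)
  obtain ⟨lam, hlamt, hlam⟩ := ((eventually_mul_lt_nhdsGT (p₀.2 + p₀.2 ^ 2)
    (by positivity : 0 < σ / 4)).and self_mem_nhdsWithin).exists
  set K := 2 * C ^ 2 / lam + C ^ 2
  obtain ⟨W, hW₁, hW₂, hW₃⟩ := ((eventually_ge_atTop (2 * ((C : ℝ) + 1))).and
    (((tendsto_id.const_mul_atTop hσ).eventually_gt_atTop (4 * C * (C + 1))).and
      ((tendsto_id.const_mul_atTop hlam).eventually_gt_atTop (4 * M * (C + 1))))).exists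
  obtain ⟨d, ⟨⟨hd₁, hd₂⟩, hd₃⟩, hd⟩ := ((((eventually_mul_lt_nhdsGT (2 * ‖p₀.1‖ ^ 2)
    (by positivity : 0 < σ / 4)).and (eventually_mul_lt_nhdsGT (2 * K) one_pos)).and
    (eventually_mul_lt_nhdsGT (32 * M ^ 2 * K) (by positivity : 0 < lam ^ 2))).and
    self_mem_nhdsWithin).exists
  simp only [id] at hW₂ hW₃
  have hW : 1 ≤ W := by linarith [C.coe_nonneg]
  obtain ⟨⟨z, w⟩, ⟨hz, hw⟩, hmax⟩ := exists_isMaxOn_doubling hu hv h0 hlam hW hd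
  simp only [Set.mem_ofPred_eq] at hz hw
  have hΦ : σ / 2 ≤ doubling u v lam W d z w := by
    refine le_trans ?_ (hmax (Set.mk_mem_prod hp₀ hp₀))
    simp only [Function.uncurry_apply_pair, doubling, sub_self, norm_zero]
    nlinarith
  set g := d * (‖z.1‖ + ‖w.1‖)
  have hg₀ : 0 ≤ g := by positivity
  have hg₂ : g ^ 2 ≤ 2 * d * K := sq_mul_norm_add_norm_le hu hv h0 hlam hW hd.le hz hw (by linarith)
  have hg₁ : g < 1 := by nlinarith
  have hgM : 4 * M * g < lam := by nlinarith
  have hWab := mul_add_le_of_isMaxOn_doubling hv (by linarith) hd.le hz hw hmax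
  by_cases hbdy : z.2 = 0 ∨ w.2 = 0
  · have := doubling_le_of_boundary (W := W) hu hv h0 hlam.le (by linarith) hd.le hz hw hbdy
    nlinarith [mul_le_mul_of_nonneg_left hWab C.coe_nonneg,
      mul_le_mul_of_nonneg_right (hΦ.trans this) (by linarith : 0 ≤ W),
      mul_le_mul_of_nonneg_left hg₁.le C.coe_nonneg]
  · rw [not_or] at hbdy
    have hWa : W * ‖z.1 - w.1‖ ≤ 2 * (C + g) := by nlinarith [abs_nonneg (z.2 - w.2)]
    have ha : ‖z.1 - w.1‖ ≤ 1 := by nlinarith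
    have hlam_le := lam_le_of_isMaxOn_doubling hM0 hM husub hvsup hlam.le (by linarith) hd.le
      (hz.lt_of_ne' hbdy.1) (hw.lt_of_ne' hbdy.2) hmax ha (by linarith)
    nlinarith [mul_le_mul_of_nonneg_left hWa hM0]

theorem uniqueness_lipschitz_viscosity_solution_general {n : ℕ}
    (H : EuclideanSpace ℝ (Fin n) × EuclideanSpace ℝ (Fin n) → ℝ)
    (hC2 : ContDiff ℝ 2 H)
    (hper : ∀ (k : Fin n → ℤ) (x p : EuclideanSpace ℝ (Fin n)),
      H (x + (show EuclideanSpace ℝ (Fin n) from WithLp.toLp 2 (fun i => (k i : ℝ))), p) = H (x, p))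
    (f : EuclideanSpace ℝ (Fin n) → ℝ)
    (u v : EuclideanSpace ℝ (Fin n) × ℝ → ℝ)
    (hulip : ∃ c, LipschitzOnWith c u {p | 0 ≤ p.2})
    (hvlip : ∃ c, LipschitzOnWith c v {p | 0 ≤ p.2})
    (husub : IsViscositySubsolutionOn (fun x p => H (x, p)) u {p | 0 < p.2})
    (husup : IsViscositySupersolutionOn (fun x p => H (x, p)) u {p | 0 < p.2})
    (hvsub : IsViscositySubsolutionOn (fun x p => H (x, p)) v {p | 0 < p.2})
    (hvsup : IsViscositySupersolutionOn (fun x p => H (x, p)) v {p | 0 < p.2})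
    (hu0 : ∀ x, u (x, 0) = f x) (hv0 : ∀ x, v (x, 0) = f x) :
    ∀ p : EuclideanSpace ℝ (Fin n) × ℝ, 0 ≤ p.2 → u p = v p := by
  obtain ⟨cu, hcu⟩ := hulip
  obtain ⟨cv, hcv⟩ := hvlip
  have hu := hcu.weaken (le_max_left cu cv)
  have hv := hcv.weaken (le_max_right cu cv)
  have hH := exists_lipschitz_bound_of_periodic (hC2.of_le one_le_two) hper
  have h0 : ∀ x, u (x, 0) = v (x, 0) := fun x => (hu0 x).trans (hv0 x).symm
  exact fun p hp => le_antisymm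
    (comparison_principle hH hu hv husub hvsup (fun x => (h0 x).le) hp)
    (comparison_principle hH hv hu hvsub husup (fun x => (h0 x).ge) hp)

/-- Uniqueness of Lipschitz viscosity solutions (torus case): for a `C²`,
`ℤⁿ`-periodic, convex and superlinear Hamiltonian `H` and Lipschitz initial datum
`f`, there is at most one Lipschitz viscosity solution of
`∂ₜu + H(x, ∂ₓu) = 0` on `ℝⁿ × (0,∞)` with `u(x,0) = f(x)`. -/
theorem uniqueness_lipschitz_viscosity_solution {n : ℕ}
    (H : EuclideanSpace ℝ (Fin n) × EuclideanSpace ℝ (Fin n) → ℝ)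
    (hC2 : ContDiff ℝ 2 H)
    (hper : ∀ (k : Fin n → ℤ) (x p : EuclideanSpace ℝ (Fin n)),
      H (x + (show EuclideanSpace ℝ (Fin n) from WithLp.toLp 2 (fun i => (k i : ℝ))), p) = H (x, p))
    -- convexity: the Hessian in `p` is positive definite
    (hconv : ∀ x p w : EuclideanSpace ℝ (Fin n), w ≠ 0 →
      0 < fderiv ℝ (fun q => fderiv ℝ (fun q' => H (x, q')) q) p w w)
    -- superlinearity, uniformly in `x`
    (hsuper : ∀ C : ℝ, ∃ R : ℝ, ∀ x p : EuclideanSpace ℝ (Fin n),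
      R ≤ ‖p‖ → C * ‖p‖ ≤ H (x, p))
    (f : EuclideanSpace ℝ (Fin n) → ℝ) (hf : ∃ c, LipschitzWith c f)
    (u v : EuclideanSpace ℝ (Fin n) × ℝ → ℝ)
    (hulip : ∃ c, LipschitzOnWith c u {p | 0 ≤ p.2})
    (hvlip : ∃ c, LipschitzOnWith c v {p | 0 ≤ p.2})
    (husub : IsViscositySubsolutionOn (fun x p => H (x, p)) u {p | 0 < p.2})
    (husup : IsViscositySupersolutionOn (fun x p => H (x, p)) u {p | 0 < p.2})
    (hvsub : IsViscositySubsolutionOn (fun x p => H (x, p)) v {p | 0 < p.2})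
    (hvsup : IsViscositySupersolutionOn (fun x p => H (x, p)) v {p | 0 < p.2})
    (hu0 : ∀ x, u (x, 0) = f x) (hv0 : ∀ x, v (x, 0) = f x) :
    ∀ p : EuclideanSpace ℝ (Fin n) × ℝ, 0 ≤ p.2 → u p = v p :=
  uniqueness_lipschitz_viscosity_solution_general H hC2 hper f u v hulip hvlip husub husup hvsub
    hvsup hu0 hv0

end
end

section
/- (Equi-Lipschitz property of the rescaled Lax–Oleinik solutions, torus case.) Let L : ℝⁿ × ℝⁿ → ℝ be a Tonelli Lagrangian lifted from the torus, and let K > 0. For each ε > 0 let f_ε : ℝⁿ → ℝ satisfy |f_ε(x) − f_ε(y)| ≤ K·ε·|x − y| for all x,y ∈ ℝⁿ, and define u^ε : ℝⁿ × [0,∞) → ℝ by u^ε(x,0) = f_ε(x) and, for t > 0, u^ε(x,t) = inf { f_ε(γ(0)) + ∫₀ᵗ L(γ(s), ε·γ'(s)) ds : γ ∈ C¹([0,t], ℝⁿ), γ(t) = x }. Then the family (u^ε) is equi-Lipschitz: there exists Q > 0 such that for every ε > 0 and all (x,t), (y,s) ∈ ℝⁿ × [0,∞), |u^ε(x,t)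 − u^ε(y,s)| ≤ Q·( |t − s| + ε·|x − y| ). -/
/-!
Write `u^ε` as the infimum `laxOleinik` of the actions of admissible curves. The constant curve
gives `u^ε(x,t) ≤ f_ε(x) + M t`, while the superlinear bound `L(x,v) ≥ K|v| - A` beats the
`Kε`-Lipschitz initial datum along any curve, so `u^ε(x,t) ≥ f_ε(x) - A t`; this settles short
times. Otherwise a curve reaching `y` at time `s` is converted into one reaching `x` at time `t`:
run its final stretch `[s - m, s]` with a `C¹` time change of speed at most one, which by
convexity of `L` in `v` costs at most `M` per unit of time lost (`M` bounds `L` on `|v| ≤ 2`),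
then move from `y` to `x` during a time `≥ ε|x - y|` at velocity of norm at most `2`.
Periodicity makes `M` and `A` finite.
-/

open Set Topology intervalIntegral

noncomputable section

/-- A Tonelli Lagrangian lifted from the torus: `L : ℝⁿ × ℝⁿ → ℝ` is `C²`,
`ℤⁿ`-periodic in `x`, the Hessian `∂²L/∂v∂v` is positive definite everywhere,
and `L` is superlinear in `v`, uniformly in `x`. -/
def IsTonelliPeriodic {n : ℕ}
    (L : EuclideanSpace ℝ (Fin n) × EuclideanSpace ℝ (Fin n) → ℝ) : Prop :=
  ContDiff ℝ 2 L ∧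
  (∀ (k : Fin n → ℤ) (x v : EuclideanSpace ℝ (Fin n)),
    L (x + (show EuclideanSpace ℝ (Fin n) from WithLp.toLp 2 fun i => (k i : ℝ)), v) = L (x, v)) ∧
  (∀ x v w : EuclideanSpace ℝ (Fin n), w ≠ 0 →
    0 < fderiv ℝ (fun q => fderiv ℝ (fun q' => L (x, q')) q) v w w) ∧
  (∀ C : ℝ, ∃ R : ℝ, ∀ x v : EuclideanSpace ℝ (Fin n), R ≤ ‖v‖ → C * ‖v‖ ≤ L (x, v))

theorem convexOn_univ_of_fderiv_fderiv_nonneg {E : Type*} [NormedAddCommGroup E]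
    [NormedSpace ℝ E] {h : E → ℝ} (hh : ContDiff ℝ 2 h)
    (hh2 : ∀ p d : E, 0 ≤ fderiv ℝ (fderiv ℝ h) p d d) : ConvexOn ℝ univ h := by
  refine ⟨convex_univ, fun u _ v _ a b ha hb hab => ?_⟩
  have hline : ∀ c : ℝ, HasDerivAt (fun c : ℝ => v + c • (u - v)) (u - v) c := fun c => by
    simpa using ((hasDerivAt_id c).smul_const (u - v)).const_add v
  have hd1 : ∀ c : ℝ, HasDerivAt (fun c => h (v + c • (u - v)))
      (fderiv ℝ h (v + c • (u - v)) (u - v)) c := fun c =>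
    ((hh.differentiable two_ne_zero).differentiableAt.hasFDerivAt).comp_hasDerivAt c (hline c)
  have hd2 : ∀ c : ℝ, HasDerivAt (fun c => fderiv ℝ h (v + c • (u - v)) (u - v))
      (fderiv ℝ (fderiv ℝ h) (v + c • (u - v)) (u - v) (u - v)) c := fun c => by
    have hD : Differentiable ℝ (fderiv ℝ h) :=
      (hh.fderiv_right (m := 1) le_rfl).differentiable one_ne_zero
    simpa using ((hD _).hasFDerivAt.comp_hasDerivAt c (hline c)).clm_apply
      (hasDerivAt_const c (u - v))
  have hderiv : deriv (fun c => h (v + c • (u - v))) =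
      fun c => fderiv ℝ h (v + c • (u - v)) (u - v) := funext fun c => (hd1 c).deriv
  have hconv : ConvexOn ℝ univ fun c : ℝ => h (v + c • (u - v)) :=
    convexOn_univ_of_deriv2_nonneg (fun c => (hd1 c).differentiableAt)
      (hderiv ▸ fun c => (hd2 c).differentiableAt) fun c => by
        rw [Function.iterate_succ_apply, Function.iterate_one, hderiv, (hd2 c).deriv]
        exact hh2 _ _
  have := hconv.2 (mem_univ 1) (mem_univ 0) ha hb hab
  have hab' : a • u + b • v = v + (a • (1 : ℝ) + b • (0 : ℝ)) • (u - v) := by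
    rw [eq_sub_of_add_eq' hab]
    simp only [smul_eq_mul, mul_one, mul_zero, add_zero, smul_sub, sub_smul, one_smul]
    abel
  simpa [hab'] using this

namespace IsTonelliPeriodic

variable {n : ℕ} {L : EuclideanSpace ℝ (Fin n) × EuclideanSpace ℝ (Fin n) → ℝ}

theorem convexOn (hL : IsTonelliPeriodic L) (x : EuclideanSpace ℝ (Fin n)) :
    ConvexOn ℝ univ fun v => L (x, v) := by
  refine convexOn_univ_of_fderiv_fderiv_nonneg
    (hL.1.comp (contDiff_const.prodMk contDiff_id)) fun p d => ?_
  rcases eq_or_ne d 0 with rfl | hd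
  · simp
  · exact (hL.2.2.1 x p d hd).le

theorem exists_abs_le (hL : IsTonelliPeriodic L) (r : ℝ) :
    ∃ M, 0 ≤ M ∧ ∀ x v, ‖v‖ ≤ r → |L (x, v)| ≤ M := by
  set cube : Set (EuclideanSpace ℝ (Fin n)) :=
    (EuclideanSpace.equiv (Fin n) ℝ).symm '' univ.pi fun _ => Icc 0 1
  have hcube : IsCompact (cube ×ˢ Metric.closedBall (0 : EuclideanSpace ℝ (Fin n)) r) :=
    ((isCompact_univ_pi fun _ => isCompact_Icc).image
      (EuclideanSpace.equiv (Fin n) ℝ).symm.continuous).prod (isCompact_closedBall _ _)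
  obtain ⟨M, hM⟩ := hcube.exists_bound_of_continuousOn hL.1.continuous.continuousOn
  refine ⟨max M 0, le_max_right _ _, fun x v hv => le_max_of_le_left ?_⟩
  set x₀ : EuclideanSpace ℝ (Fin n) := WithLp.toLp 2 fun i => Int.fract (x i)
  have hx₀ : L (x, v) = L (x₀, v) := by
    rw [← hL.2.1 (fun i => ⌊x i⌋) x₀ v]
    congr 2
    ext i
    simp [x₀]
  rw [hx₀]
  exact hM (x₀, v) ⟨⟨_, fun i _ => ⟨Int.fract_nonneg _, (Int.fract_lt_one _).le⟩, rfl⟩,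
    mem_closedBall_zero_iff.2 hv⟩

theorem exists_sub_le (hL : IsTonelliPeriodic L) (C : ℝ) :
    ∃ A, 0 ≤ A ∧ ∀ x v, C * ‖v‖ - A ≤ L (x, v) := by
  obtain ⟨R, hR⟩ := hL.2.2.2 C
  obtain ⟨M, hM0, hM⟩ := hL.exists_abs_le R
  refine ⟨|C| * |R| + M, by positivity, fun x v => ?_⟩
  rcases le_total R ‖v‖ with hv | hv
  · linarith [hR x v hv, mul_nonneg (abs_nonneg C) (abs_nonneg R)]
  · have hCv : C * ‖v‖ ≤ |C| * |R| := by
      calc C * ‖v‖ ≤ |C| * ‖v‖ := by gcongr; exact le_abs_self C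
        _ ≤ |C| * |R| := by gcongr; exact hv.trans (le_abs_self R)
    linarith [neg_abs_le (L (x, v)), hM x v hv]

end IsTonelliPeriodic

theorem exists_continuous_plateau {a b δ : ℝ} (hδ : 0 < δ) :
    ∃ ρ : ℝ → ℝ, Continuous ρ ∧ (∀ u, ρ u ∈ Icc 0 1) ∧ (∀ u ∉ Ioo a b, ρ u = 0) ∧
      ∀ u ∈ Icc (a + δ) (b - δ), ρ u = 1 := by
  have h0 : ∀ {c}, c ≤ 0 → Real.smoothTransition (c / δ) = 0 := fun hc =>
    Real.smoothTransition.zero_of_nonpos (div_nonpos_of_nonpos_of_nonneg hc hδ.le)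
  have h1 : ∀ {c}, δ ≤ c → Real.smoothTransition (c / δ) = 1 := fun hc =>
    Real.smoothTransition.one_of_one_le ((one_le_div hδ).2 hc)
  refine ⟨fun u => Real.smoothTransition ((u - a) / δ) * Real.smoothTransition ((b - u) / δ),
    by fun_prop, fun u => ⟨?_, ?_⟩, fun u hu => ?_, fun u hu => ?_⟩
  · exact mul_nonneg (Real.smoothTransition.nonneg _) (Real.smoothTransition.nonneg _)
  · exact mul_le_one₀ (Real.smoothTransition.le_one _) (Real.smoothTransition.nonneg _)
      (Real.smoothTransition.le_one _)
  · rcases le_or_gt u a with hua | hau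
    · simp [h0 (sub_nonpos.2 hua)]
    · simp [h0 (sub_nonpos.2 (not_lt.1 fun hub => hu ⟨hau, hub⟩))]
  · beta_reduce
    rw [h1 (by linarith [hu.1]), h1 (by linarith [hu.2]), mul_one]

theorem exists_contDiff_ramp {a b h k : ℝ} (hab : a < b) (hh : 0 ≤ h) (hk : h < k * (b - a)) :
    ∃ ψ : ℝ → ℝ, ContDiff ℝ 1 ψ ∧ (∀ σ ≤ a, ψ σ = 0) ∧ (∀ σ ≥ b, ψ σ = h) ∧
      (∀ σ, deriv ψ σ ∈ Icc 0 k) ∧ ∀ σ ∉ Ioo a b, deriv ψ σ = 0 := by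
  have hk0 : 0 < k := pos_of_mul_pos_left (hh.trans_lt hk) (sub_pos.2 hab).le
  have hhk : 0 ≤ h / k ∧ h / k < b - a := ⟨by positivity, (div_lt_iff₀ hk0).2 (by linarith)⟩
  -- `δ` leaves a plateau of length `h / k + δ > h / k`, enough to rise by `h` at slope `≤ k`
  set δ := (b - a - h / k) / 3 with hδ
  obtain ⟨ρ, hρc, hρ, hρout, hρ1⟩ :=
    exists_continuous_plateau (a := a) (b := b) (by rw [hδ]; linarith : 0 < δ)
  set I := ∫ u in a..b, ρ u
  have hI : h / k < I := by
    have hplateau : ∫ u in (a + δ)..(b - δ), ρ u = b - a - 2 * δ := by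
      rw [integral_congr (g := fun _ => 1) fun u hu =>
        hρ1 u (uIcc_of_le (by linarith : a + δ ≤ b - δ) ▸ hu)]
      rw [integral_const, smul_eq_mul, mul_one]
      ring
    have := integral_mono_interval (μ := MeasureTheory.volume) (by linarith : a ≤ a + δ)
      (by linarith : a + δ ≤ b - δ) (by linarith : b - δ ≤ b)
      (Filter.Eventually.of_forall fun u => (hρ u).1) (hρc.intervalIntegrable a b)
    linarith
  have hI0 : 0 < I := hhk.1.trans_lt hI
  set ψ : ℝ → ℝ := fun σ => h / I * ∫ u in a..σ, ρ u
  have hψ' : ∀ σ, HasDerivAt ψ (h / I * ρ σ) σ := fun σ =>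
    (hρc.integral_hasStrictDerivAt a σ).hasDerivAt.const_mul _
  have hderiv : deriv ψ = fun σ => h / I * ρ σ := funext fun σ => (hψ' σ).deriv
  refine ⟨ψ, ?_, fun σ hσ => ?_, fun σ hσ => ?_, fun σ => ?_, fun σ hσ => ?_⟩
  · exact contDiff_one_iff_deriv.2 ⟨fun σ => (hψ' σ).differentiableAt,
      hderiv ▸ continuous_const.mul hρc⟩
  · simp only [ψ]
    rw [integral_congr (g := fun _ => 0) fun u hu => hρout u fun h' =>
      h'.1.not_ge (uIcc_of_ge hσ ▸ hu).2]
    simp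
  · simp only [ψ]
    rw [← integral_add_adjacent_intervals (hρc.intervalIntegrable a b)
      (hρc.intervalIntegrable b σ), integral_congr (a := b) (g := fun _ => 0) fun u hu =>
        hρout u fun h' => h'.2.not_ge (uIcc_of_le hσ ▸ hu).1]
    simpa using div_mul_cancel₀ h hI0.ne'
  · rw [hderiv]
    refine ⟨mul_nonneg (div_nonneg hh hI0.le) (hρ σ).1, ?_⟩
    calc h / I * ρ σ ≤ h / I := mul_le_of_le_one_right (div_nonneg hh hI0.le) (hρ σ).2
      _ ≤ k := (div_le_iff₀ hI0).2 (by rw [div_lt_iff₀ hk0] at hI; linarith)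
  · simp [hderiv, hρout σ hσ]

namespace Lagrangian

variable {E : Type*} [NormedAddCommGroup E] [NormedSpace ℝ E]
  {L : E × E → ℝ} {f : E → ℝ} {ε K A M : ℝ}

def action (L : E × E → ℝ) (f : E → ℝ) (ε : ℝ) (γ : ℝ → E) (t : ℝ) : ℝ :=
  f (γ 0) + ∫ s in (0 : ℝ)..t, L (γ s, ε • deriv γ s)

def laxOleinik (L : E × E → ℝ) (f : E → ℝ) (ε : ℝ) (x : E) (t : ℝ) : ℝ :=
  sInf {a : ℝ | ∃ γ : ℝ → E, ContDiff ℝ 1 γ ∧ γ t = x ∧ a = action L f ε γ t}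

theorem action_const (x : E) (t : ℝ) :
    action L f ε (fun _ => x) t = f x + t * L (x, 0) := by
  simp [action]

theorem laxOleinik_zero (x : E) : laxOleinik L f ε x 0 = f x := by
  have : {a : ℝ | ∃ γ : ℝ → E, ContDiff ℝ 1 γ ∧ γ 0 = x ∧ a = action L f ε γ 0} = {f x} := by
    ext a
    constructor
    · rintro ⟨γ, -, hγ, rfl⟩
      simp [action, hγ]
    · rintro rfl
      exact ⟨fun _ => x, contDiff_const, rfl, by simp [action]⟩
  rw [laxOleinik, this, csInf_singleton]

theorem le_laxOleinik {x : E} {t c : ℝ}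
    (h : ∀ γ : ℝ → E, ContDiff ℝ 1 γ → γ t = x → c ≤ action L f ε γ t) :
    c ≤ laxOleinik L f ε x t :=
  le_csInf ⟨_, fun _ => x, contDiff_const, rfl, rfl⟩ fun _ ⟨γ, hγ, hγt, ha⟩ => ha ▸ h γ hγ hγt

theorem integral_reparam_le (hLc : Continuous L)
    (hconv : ∀ x, ConvexOn ℝ univ fun v => L (x, v)) (hM : ∀ x, L (x, 0) ≤ M)
    {γ : ℝ → E} (hγ : ContDiff ℝ 1 γ) {θ : ℝ → ℝ}
    (hθ : ContDiff ℝ 1 θ) (hθ' : ∀ σ, deriv θ σ ∈ Icc 0 1) {a b : ℝ} (hab : a ≤ b) :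
    ∫ σ in a..b, L (γ (θ σ), ε • deriv θ σ • deriv γ (θ σ))
      ≤ (∫ r in θ a..θ b, L (γ r, ε • deriv γ r)) + M * (b - a - (θ b - θ a)) := by
  set g : ℝ → ℝ := fun r => L (γ r, ε • deriv γ r)
  have hγ' := hγ.continuous_deriv le_rfl
  have hθ'c := hθ.continuous_deriv le_rfl
  have hgc : Continuous g := hLc.comp (hγ.continuous.prodMk (hγ'.const_smul ε))
  have hθd : ∀ σ, HasDerivAt θ (deriv θ σ) σ := fun σ =>
    ((hθ.differentiable one_ne_zero) σ).hasDerivAt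
  have hpt : ∀ σ, L (γ (θ σ), ε • deriv θ σ • deriv γ (θ σ))
      ≤ (g ∘ θ) σ * deriv θ σ + M * (1 - deriv θ σ) := fun σ => by
    have := (hconv (γ (θ σ))).2 (mem_univ (ε • deriv γ (θ σ))) (mem_univ 0) (hθ' σ).1
      (sub_nonneg.2 (hθ' σ).2) (add_sub_cancel _ _)
    rw [smul_zero, add_zero, smul_comm] at this
    simp only [smul_eq_mul] at this
    have hM' := mul_le_mul_of_nonneg_left (hM (γ (θ σ))) (sub_nonneg.2 (hθ' σ).2)
    simp only [Function.comp_apply, g]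
    linarith
  calc ∫ σ in a..b, L (γ (θ σ), ε • deriv θ σ • deriv γ (θ σ))
      ≤ ∫ σ in a..b, ((g ∘ θ) σ * deriv θ σ + M * (1 - deriv θ σ)) :=
        integral_mono_on hab (Continuous.intervalIntegrable (by fun_prop) _ _)
          (Continuous.intervalIntegrable (by fun_prop) _ _) fun σ _ => hpt σ
    _ = (∫ r in θ a..θ b, g r) + M * (b - a - (θ b - θ a)) := by
      rw [integral_add (Continuous.intervalIntegrable (by fun_prop) _ _)
          (Continuous.intervalIntegrable (by fun_prop) _ _),
        integral_comp_mul_deriv (fun σ _ => hθd σ) hθ'c.continuousOn hgc,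
        integral_const_mul, integral_sub intervalIntegrable_const
          (hθ'c.intervalIntegrable _ _),
        integral_deriv_eq_sub (fun σ _ => (hθd σ).differentiableAt)
          (hθ'c.intervalIntegrable _ _)]
      simp

theorem exists_shift_action_le (hLc : Continuous L) (hM : ∀ x v, ‖v‖ ≤ 2 → L (x, v) ≤ M)
    (hε : 0 ≤ ε) {η : ℝ → E} (hη : ContDiff ℝ 1 η) {y : E} {w t : ℝ} (hw : 0 ≤ w)
    (hwt : w < t) (hηw : ∀ σ ≥ w, η σ = y ∧ deriv η σ = 0) (x : E) (hxy : ε * ‖x - y‖ ≤ t - w) :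
    ∃ ζ : ℝ → E, ContDiff ℝ 1 ζ ∧ ζ t = x ∧
      action L f ε ζ t ≤ action L f ε η w + M * (t - w) := by
  have htw : 0 < t - w := sub_pos.2 hwt
  obtain ⟨φ, hφ, hφ0, hφt, hφ', hφout⟩ :=
    exists_contDiff_ramp (h := 1) (k := 2 / (t - w)) hwt zero_le_one
      (by rw [div_mul_cancel₀ _ htw.ne']; norm_num)
  set ζ : ℝ → E := fun σ => η σ + φ σ • (x - y)
  have hζ : ContDiff ℝ 1 ζ := hη.add (hφ.smul contDiff_const)
  have hζ' : ∀ σ, deriv ζ σ = deriv η σ + deriv φ σ • (x - y) := fun σ =>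
    ((hη.differentiable one_ne_zero σ).hasDerivAt.add
      ((hφ.differentiable one_ne_zero σ).hasDerivAt.smul_const (x - y))).deriv
  have hζc : Continuous fun σ => L (ζ σ, ε • deriv ζ σ) :=
    hLc.comp (hζ.continuous.prodMk ((hζ.continuous_deriv le_rfl).const_smul ε))
  have hbefore : ∀ σ ≤ w, ζ σ = η σ ∧ deriv ζ σ = deriv η σ := fun σ hσ => by
    simp [ζ, hζ', hφ0 σ hσ, hφout σ fun h => h.1.not_ge hσ]
  have hafter : ∫ σ in w..t, L (ζ σ, ε • deriv ζ σ) ≤ M * (t - w) := by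
    calc ∫ σ in w..t, L (ζ σ, ε • deriv ζ σ) ≤ ∫ _ in w..t, M :=
          integral_mono_on hwt.le (hζc.intervalIntegrable _ _)
            intervalIntegrable_const fun σ hσ => hM (ζ σ) (ε • deriv ζ σ) ?_
      _ = M * (t - w) := by simp [mul_comm]
    rw [hζ', (hηw σ hσ.1).2, zero_add, norm_smul, norm_smul, Real.norm_of_nonneg hε,
      Real.norm_of_nonneg (hφ' σ).1]
    calc ε * (deriv φ σ * ‖x - y‖) ≤ 2 / (t - w) * (ε * ‖x - y‖) := by
          rw [mul_left_comm]; gcongr; exact (hφ' σ).2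
      _ ≤ 2 / (t - w) * (t - w) := by gcongr
      _ = 2 := div_mul_cancel₀ _ htw.ne'
  have hbeforeInt : ∫ σ in (0 : ℝ)..w, L (ζ σ, ε • deriv ζ σ)
      = ∫ σ in (0 : ℝ)..w, L (η σ, ε • deriv η σ) :=
    integral_congr fun σ hσ => by
      rw [uIcc_of_le hw] at hσ
      simp only [(hbefore σ hσ.2).1, (hbefore σ hσ.2).2]
  refine ⟨ζ, hζ, by simp [ζ, (hηw t hwt.le).1, hφt t le_rfl], ?_⟩
  rw [action, action, ← integral_add_adjacent_intervals (hζc.intervalIntegrable 0 w)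
    (hζc.intervalIntegrable w t), hbeforeInt, (hbefore 0 hw).1]
  linarith

variable [CompleteSpace E]

theorem sub_mul_le_action (hLc : Continuous L) (hK : 0 ≤ K) (hε : 0 ≤ ε)
    (hlow : ∀ x v, K * ‖v‖ - A ≤ L (x, v)) (hf : ∀ x y, |f x - f y| ≤ K * ε * ‖x - y‖)
    {γ : ℝ → E} (hγ : ContDiff ℝ 1 γ) {r : ℝ} (hr : 0 ≤ r) :
    f (γ r) - A * r ≤ action L f ε γ r := by
  have hγ' : Continuous (deriv γ) := hγ.continuous_deriv le_rfl
  have hdisp : ‖γ r - γ 0‖ ≤ ∫ σ in (0 : ℝ)..r, ‖deriv γ σ‖ := by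
    rw [← integral_deriv_eq_sub
      (fun σ _ => (hγ.differentiable one_ne_zero) σ) (hγ'.intervalIntegrable _ _)]
    exact norm_integral_le_integral_norm hr
  have hpath : ∫ σ in (0 : ℝ)..r, (K * ε * ‖deriv γ σ‖ - A)
      ≤ ∫ σ in (0 : ℝ)..r, L (γ σ, ε • deriv γ σ) := by
    refine integral_mono_on hr
      (((hγ'.norm.const_mul _).sub continuous_const).intervalIntegrable _ _)
      ((hLc.comp (hγ.continuous.prodMk (hγ'.const_smul ε))).intervalIntegrable _ _)
      fun σ _ => ?_
    simpa [norm_smul, abs_of_nonneg hε, mul_assoc] using hlow (γ σ) (ε • deriv γ σ)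
  rw [integral_sub ((hγ'.norm.const_mul _).intervalIntegrable _ _)
    intervalIntegrable_const, integral_const_mul,
    integral_const, smul_eq_mul, sub_zero] at hpath
  calc f (γ r) - A * r ≤ f (γ 0) + K * ε * ‖γ r - γ 0‖ - A * r := by
        linarith [(le_abs_self _).trans (hf (γ r) (γ 0))]
    _ ≤ f (γ 0) + K * ε * (∫ σ in (0 : ℝ)..r, ‖deriv γ σ‖) - A * r := by gcongr
    _ ≤ action L f ε γ r := by rw [action]; linarith

theorem laxOleinik_le_action (hLc : Continuous L) (hK : 0 ≤ K) (hε : 0 ≤ ε)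
    (hlow : ∀ x v, K * ‖v‖ - A ≤ L (x, v)) (hf : ∀ x y, |f x - f y| ≤ K * ε * ‖x - y‖)
    {x : E} {t : ℝ} (ht : 0 ≤ t) {γ : ℝ → E} (hγ : ContDiff ℝ 1 γ) (hγt : γ t = x) :
    laxOleinik L f ε x t ≤ action L f ε γ t :=
  csInf_le ⟨f x - A * t, fun _ ⟨_, hη, hηt, ha⟩ =>
    ha ▸ hηt ▸ sub_mul_le_action hLc hK hε hlow hf hη ht⟩ ⟨γ, hγ, hγt, rfl⟩

theorem sub_mul_le_laxOleinik (hLc : Continuous L) (hK : 0 ≤ K) (hε : 0 ≤ ε)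
    (hlow : ∀ x v, K * ‖v‖ - A ≤ L (x, v)) (hf : ∀ x y, |f x - f y| ≤ K * ε * ‖x - y‖)
    (x : E) {t : ℝ} (ht : 0 ≤ t) : f x - A * t ≤ laxOleinik L f ε x t :=
  le_laxOleinik fun _ hγ hγt => hγt ▸ sub_mul_le_action hLc hK hε hlow hf hγ ht

theorem laxOleinik_le_add_mul (hLc : Continuous L) (hK : 0 ≤ K) (hε : 0 ≤ ε)
    (hlow : ∀ x v, K * ‖v‖ - A ≤ L (x, v)) (hf : ∀ x y, |f x - f y| ≤ K * ε * ‖x - y‖)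
    (hM : ∀ x, L (x, 0) ≤ M) (x : E) {t : ℝ} (ht : 0 ≤ t) :
    laxOleinik L f ε x t ≤ f x + M * t := by
  calc laxOleinik L f ε x t ≤ action L f ε (fun _ => x) t :=
        laxOleinik_le_action hLc hK hε hlow hf ht contDiff_const rfl
    _ ≤ f x + M * t := by rw [action_const, mul_comm]; gcongr; exact hM x

theorem exists_delay_action_le (hLc : Continuous L)
    (hconv : ∀ x, ConvexOn ℝ univ fun v => L (x, v)) (hM : ∀ x, L (x, 0) ≤ M) (hK : 0 ≤ K)
    (hε : 0 ≤ ε) (hlow : ∀ x v, K * ‖v‖ - A ≤ L (x, v))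
    (hf : ∀ x y, |f x - f y| ≤ K * ε * ‖x - y‖) {γ : ℝ → E} (hγ : ContDiff ℝ 1 γ)
    {s m w : ℝ} (hm : 0 ≤ m) (hms : m ≤ s) (hmw : m < w) :
    ∃ η : ℝ → E, ContDiff ℝ 1 η ∧ (∀ σ ≥ w, η σ = γ s ∧ deriv η σ = 0) ∧
      action L f ε η w ≤ action L f ε γ s + A * (s - m) + M * (w - m) := by
  obtain ⟨ψ, hψ, hψ0, hψw, hψ', hψout⟩ :=
    exists_contDiff_ramp (k := 1) (hm.trans_lt hmw) hm (by linarith)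
  set θ : ℝ → ℝ := fun σ => s - m + ψ σ
  have hθ : ContDiff ℝ 1 θ := contDiff_const.add hψ
  have hθ' : ∀ σ, deriv θ σ = deriv ψ σ := fun σ => deriv_const_add _
  have hθ0 : θ 0 = s - m := by simp [θ, hψ0 0 le_rfl]
  have hθw : ∀ σ ≥ w, θ σ = s := fun σ hσ => by simp [θ, hψw σ hσ]
  have hη' : ∀ σ, deriv (γ ∘ θ) σ = deriv θ σ • deriv γ (θ σ) := fun σ =>
    deriv.scomp σ (hγ.differentiable one_ne_zero _) (hθ.differentiable one_ne_zero _)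
  have hγc : Continuous fun r => L (γ r, ε • deriv γ r) :=
    hLc.comp (hγ.continuous.prodMk ((hγ.continuous_deriv le_rfl).const_smul ε))
  refine ⟨γ ∘ θ, hγ.comp hθ, fun σ hσ => ⟨by simp [hθw σ hσ], ?_⟩, ?_⟩
  · rw [hη', hθ', hψout σ fun h => h.2.not_ge hσ, zero_smul]
  have hreparam := integral_reparam_le (ε := ε) hLc hconv hM hγ hθ
    (fun σ => hθ' σ ▸ hψ' σ) (hm.trans hmw.le)
  rw [hθ0, hθw w le_rfl] at hreparam
  have hstart := sub_mul_le_action hLc hK hε hlow hf hγ (sub_nonneg.2 hms)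
  rw [action] at hstart
  rw [action, action, Function.comp_apply, hθ0, ← integral_add_adjacent_intervals
    (hγc.intervalIntegrable 0 (s - m)) (hγc.intervalIntegrable (s - m) s)]
  simp only [Function.comp_apply, hη']
  linarith

theorem laxOleinik_le_laxOleinik_add (hLc : Continuous L)
    (hconv : ∀ x, ConvexOn ℝ univ fun v => L (x, v)) (hM : ∀ x v, ‖v‖ ≤ 2 → L (x, v) ≤ M)
    (hK : 0 ≤ K) (hε : 0 ≤ ε) (hlow : ∀ x v, K * ‖v‖ - A ≤ L (x, v))
    (hf : ∀ x y, |f x - f y| ≤ K * ε * ‖x - y‖) {x y : E} {s t m w : ℝ} (hm : 0 ≤ m)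
    (hms : m ≤ s) (hmw : m < w) (hwt : w < t) (hxy : ε * ‖x - y‖ ≤ t - w) :
    laxOleinik L f ε x t ≤ laxOleinik L f ε y s + A * (s - m) + M * (t - m) := by
  rw [add_assoc, ← sub_le_iff_le_add]
  refine le_laxOleinik fun γ hγ hγs => ?_
  obtain ⟨η, hη, hηw, hηact⟩ := exists_delay_action_le hLc hconv (fun x => hM x 0 (by simp))
    hK hε hlow hf hγ hm hms hmw
  obtain ⟨ζ, hζ, hζt, hζact⟩ := exists_shift_action_le (f := f) hLc hM hε hη
    (hm.trans hmw.le) hwt (hγs ▸ hηw) x hxy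
  have := laxOleinik_le_action hLc hK hε hlow hf (by linarith) hζ hζt
  linarith

theorem laxOleinik_sub_laxOleinik_le (hLc : Continuous L) (hM : ∀ x, L (x, 0) ≤ M)
    (hK : 0 ≤ K) (hε : 0 ≤ ε) (hlow : ∀ x v, K * ‖v‖ - A ≤ L (x, v))
    (hf : ∀ x y, |f x - f y| ≤ K * ε * ‖x - y‖) (x y : E) {t s : ℝ} (ht : 0 ≤ t) (hs : 0 ≤ s) :
    laxOleinik L f ε x t - laxOleinik L f ε y s ≤ K * ε * ‖x - y‖ + M * t + A * s := by
  linarith [laxOleinik_le_add_mul hLc hK hε hlow hf hM x ht,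
    sub_mul_le_laxOleinik hLc hK hε hlow hf y hs, (le_abs_self _).trans (hf x y)]

theorem laxOleinik_sub_le (hLc : Continuous L)
    (hconv : ∀ x, ConvexOn ℝ univ fun v => L (x, v)) (hM : ∀ x v, ‖v‖ ≤ 2 → L (x, v) ≤ M)
    (hM0 : 0 ≤ M) (hK : 0 ≤ K) (hA : 0 ≤ A) (hε : 0 < ε)
    (hlow : ∀ x v, K * ‖v‖ - A ≤ L (x, v)) (hf : ∀ x y, |f x - f y| ≤ K * ε * ‖x - y‖)
    (x y : E) {t s : ℝ} (ht : 0 ≤ t) (hs : 0 ≤ s) :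
    laxOleinik L f ε x t - laxOleinik L f ε y s
      ≤ (K + 2 * M + 3 * A) * (|t - s| + ε * ‖x - y‖) := by
  set d := |t - s| + ε * ‖x - y‖
  have hd0 : 0 ≤ d := by positivity
  have hts : |t - s| ≤ d := le_add_of_nonneg_right (by positivity)
  have hτ : ε * ‖x - y‖ ≤ d := le_add_of_nonneg_left (abs_nonneg _)
  obtain ⟨hts', hst'⟩ := abs_sub_le_iff.1 hts
  rcases le_or_gt t (2 * d) with htd | hdt
  · have := laxOleinik_sub_laxOleinik_le hLc (fun x => hM x 0 (by simp)) hK hε.le hlow hf x y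
      ht hs
    nlinarith [mul_le_mul_of_nonneg_left htd hM0,
      mul_le_mul_of_nonneg_left (by linarith : s ≤ 3 * d) hA, mul_le_mul_of_nonneg_left hτ hK]
  rcases hd0.eq_or_lt with hd | hd
  · obtain rfl : t = s := sub_eq_zero.1 (abs_eq_zero.1 (by linarith [abs_nonneg (t - s)]))
    obtain rfl : x = y := sub_eq_zero.1 (norm_eq_zero.1
      ((mul_eq_zero.1 (by linarith [abs_nonneg (t - t)] : ε * ‖x - y‖ = 0)).resolve_left hε.ne'))
    rw [sub_self]
    exact mul_nonneg (by linarith) hd0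
  have hcmp := laxOleinik_le_laxOleinik_add (f := f) (x := x) (y := y) (s := s) (t := t)
    (m := min s (t - 2 * d)) (w := t - d) hLc hconv hM hK hε.le hlow hf
    (le_min hs (by linarith)) (min_le_left _ _) ((min_le_right _ _).trans_lt (by linarith))
    (by linarith) (by linarith)
  have hsm : s - min s (t - 2 * d) ≤ 3 * d := by
    rcases min_cases s (t - 2 * d) with ⟨h, _⟩ | ⟨h, _⟩ <;> rw [h] <;> linarith
  have htm : t - min s (t - 2 * d) ≤ 2 * d := by
    rcases min_cases s (t - 2 * d) with ⟨h, _⟩ | ⟨h, _⟩ <;> rw [h] <;> linarith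
  nlinarith [mul_le_mul_of_nonneg_left hsm hA, mul_le_mul_of_nonneg_left htm hM0,
    mul_nonneg hK hd.le]

end Lagrangian

/-- Equi-Lipschitz property of the rescaled Lax–Oleinik solutions (torus case):
if `L` is a Tonelli Lagrangian lifted from the torus, the initial data `f_ε`
satisfy `|f_ε x − f_ε y| ≤ K·ε·|x − y|`, and `u^ε` is given by the Lax–Oleinik
formula `u^ε(x,t) = inf { f_ε(γ(0)) + ∫₀ᵗ L(γ(s), ε·γ'(s)) ds : γ C¹, γ(t) = x }`
for `t > 0` (with `u^ε(x,0) = f_ε(x)`), then there exists `Q > 0` such that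
`|u^ε(x,t) − u^ε(y,s)| ≤ Q·(|t − s| + ε·|x − y|)` for all `ε > 0` and all
`(x,t), (y,s) ∈ ℝⁿ × [0,∞)`. -/
theorem lax_oleinik_equiLipschitz {n : ℕ}
    (L : EuclideanSpace ℝ (Fin n) × EuclideanSpace ℝ (Fin n) → ℝ)
    (hL : IsTonelliPeriodic L)
    (K : ℝ) (hK : 0 < K)
    (f : ℝ → EuclideanSpace ℝ (Fin n) → ℝ)
    (hf : ∀ ε > (0 : ℝ), ∀ x y : EuclideanSpace ℝ (Fin n),
      |f ε x - f ε y| ≤ K * ε * ‖x - y‖)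
    (u : ℝ → EuclideanSpace ℝ (Fin n) → ℝ → ℝ)
    (hu0 : ∀ ε > (0 : ℝ), ∀ x : EuclideanSpace ℝ (Fin n), u ε x 0 = f ε x)
    (hu : ∀ ε > (0 : ℝ), ∀ x : EuclideanSpace ℝ (Fin n), ∀ t > (0 : ℝ),
      u ε x t = sInf {a : ℝ | ∃ γ : ℝ → EuclideanSpace ℝ (Fin n), ContDiff ℝ 1 γ ∧
        γ t = x ∧ a = f ε (γ 0) + ∫ s in (0 : ℝ)..t, L (γ s, ε • deriv γ s)}) :
    ∃ Q > (0 : ℝ), ∀ ε > (0 : ℝ), ∀ x y : EuclideanSpace ℝ (Fin n), ∀ t s : ℝ,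
      0 ≤ t → 0 ≤ s → |u ε x t - u ε y s| ≤ Q * (|t - s| + ε * ‖x - y‖) := by
  obtain ⟨M, hM0, hM⟩ := hL.exists_abs_le 2
  obtain ⟨A, hA0, hlow⟩ := hL.exists_sub_le K
  refine ⟨K + 2 * M + 3 * A, by positivity, fun ε hε x y t s ht hs => ?_⟩
  have hU : ∀ z r, 0 ≤ r → u ε z r = Lagrangian.laxOleinik L (f ε) ε z r := fun z r hr => by
    rcases hr.eq_or_lt with rfl | hr
    · rw [hu0 ε hε, Lagrangian.laxOleinik_zero]
    · exact hu ε hε z r hr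
  have key := fun x y {t s : ℝ} (ht : 0 ≤ t) (hs : 0 ≤ s) =>
    Lagrangian.laxOleinik_sub_le hL.1.continuous hL.convexOn
      (fun x v hv => (le_abs_self _).trans (hM x v hv)) hM0 hK.le hA0 hε hlow (hf ε hε) x y
      ht hs
  rw [hU x t ht, hU y s hs]
  refine abs_sub_le_iff.2 ⟨key x y ht hs, ?_⟩
  rw [abs_sub_comm, norm_sub_rev]
  exact key y x hs ht

end
end
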